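/- Let B := A^{coH} ⊆ A be a quantum principal bundle. There is a group isomorphism θ: Gau(B,A) → aut_v(B,A), θ(f)(a) := a₀ f(a₁), from the group of gauge transformations (with convolution product) to the group of vertical automorphisms (with opposite composition), with inverse θ^{-1}(F)(h) := h⟨1⟩ F(h⟨2⟩), where τ(h) = h⟨1⟩ ⊗_B h⟨2⟩ is the translation map. -/

import Mathlib

open TensorProduct

noncomputable section

namespace QPBPaper

variable (k : Type) [Field k]

/-! ### Convolution algebra -/

/-- Convolution product of linear maps from a coalgebra to an algebra. -/
def conv {C A : Type} [AddCommGroup C] [Module k C] [Coalgebra k C]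
    [Ring A] [Algebra k A] (f g : C →ₗ[k] A) : C →ₗ[k] A :=
  LinearMap.mul' k A ∘ₗ TensorProduct.map f g ∘ₗ Coalgebra.comul

/-- Convolution unit `η ∘ ε`. -/
def convUnit {C A : Type} [AddCommGroup C] [Module k C] [Coalgebra k C]
    [Ring A] [Algebra k A] : C →ₗ[k] A :=
  Algebra.linearMap k A ∘ₗ Coalgebra.counit

def IsConvInvertible {C A : Type} [AddCommGroup C] [Module k C] [Coalgebra k C]
    [Ring A] [Algebra k A] (f : C →ₗ[k] A) : Prop :=
  ∃ g : C →ₗ[k] A, conv k f g = convUnit k ∧ conv k g f = convUnit k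

/-! ### Balanced tensor products over (co)invariants -/

section BalQ
variable {Ω : Type} [Ring Ω] [Algebra k Ω]

/-- The `S`-balancing relations inside `Ω ⊗ Ω`. -/
def balQ (S : Set Ω) : Submodule k (Ω ⊗[k] Ω) :=
  Submodule.span k
    {x | ∃ ω η β : Ω, β ∈ S ∧ x = (ω * β) ⊗ₜ[k] η - ω ⊗ₜ[k] (β * η)}

variable (S : Set Ω)

/-- The balanced tensor product `Ω ⊗_S Ω`. -/
abbrev BQuot := (Ω ⊗[k] Ω) ⧸ balQ k S

/-- Projection to the balanced tensor product. -/
def mkBQ : Ω ⊗[k] Ω →ₗ[k] BQuot k S := Submodule.mkQ (balQ k S)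

/-- Left multiplication on the first factor of `Ω ⊗_S Ω`. -/
def lBQ (x : Ω) : BQuot k S →ₗ[k] BQuot k S :=
  Submodule.mapQ _ _ (LinearMap.rTensor Ω (LinearMap.mulLeft k x)) (by
    rw [balQ, Submodule.span_le]
    rintro z ⟨ω, η, β, hβ, rfl⟩
    simp only [SetLike.mem_coe, Submodule.mem_comap, map_sub, LinearMap.rTensor_tmul,
      LinearMap.mulLeft_apply]
    apply Submodule.subset_span
    exact ⟨x * ω, η, β, hβ, by rw [mul_assoc]⟩)

/-- Right multiplication on the second factor of `Ω ⊗_S Ω`. -/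
def rBQ (x : Ω) : BQuot k S →ₗ[k] BQuot k S :=
  Submodule.mapQ _ _ (LinearMap.lTensor Ω (LinearMap.mulRight k x)) (by
    rw [balQ, Submodule.span_le]
    rintro z ⟨ω, η, β, hβ, rfl⟩
    simp only [SetLike.mem_coe, Submodule.mem_comap, map_sub, LinearMap.lTensor_tmul,
      LinearMap.mulRight_apply]
    apply Submodule.subset_span
    exact ⟨ω, η * x, β, hβ, by rw [mul_assoc]⟩)

/-- The multiplication `Ω ⊗_S Ω → Ω`. -/
def mBQ : BQuot k S →ₗ[k] Ω :=
  Submodule.liftQ _ (LinearMap.mul' k Ω) (by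
    rw [balQ, Submodule.span_le]
    rintro z ⟨ω, η, β, hβ, rfl⟩
    simp only [SetLike.mem_coe, LinearMap.mem_ker, map_sub, LinearMap.mul'_apply]
    rw [mul_assoc, sub_self])

/-- The balancing relations in positions `(1,2)` and `(2,3)` of `Ω ⊗ Ω ⊗ Ω`. -/
def bal3 : Submodule k (Ω ⊗[k] (Ω ⊗[k] Ω)) :=
  Submodule.span k
    ({x | ∃ ω η ζ β : Ω, β ∈ S ∧
        x = (ω * β) ⊗ₜ[k] (η ⊗ₜ[k] ζ) - ω ⊗ₜ[k] ((β * η) ⊗ₜ[k] ζ)} ∪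
     {x | ∃ ω η ζ β : Ω, β ∈ S ∧
        x = ω ⊗ₜ[k] ((η * β) ⊗ₜ[k] ζ) - ω ⊗ₜ[k] (η ⊗ₜ[k] (β * ζ))})

/-- The triple balanced tensor product `Ω ⊗_S Ω ⊗_S Ω`. -/
abbrev TQuot := (Ω ⊗[k] (Ω ⊗[k] Ω)) ⧸ bal3 k S

/-- Projection to the triple balanced tensor product. -/
def mkTQ : Ω ⊗[k] (Ω ⊗[k] Ω) →ₗ[k] TQuot k S := Submodule.mkQ (bal3 k S)

/-- Tensoring on the right by `z`: `Ω ⊗_S Ω → Ω ⊗_S Ω ⊗_S Ω`. -/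
def g12 (z : Ω) : BQuot k S →ₗ[k] TQuot k S :=
  Submodule.mapQ _ _ (LinearMap.lTensor Ω ((TensorProduct.mk k Ω Ω).flip z)) (by
    rw [balQ, Submodule.span_le]
    rintro w ⟨ω, η, β, hβ, rfl⟩
    simp only [SetLike.mem_coe, Submodule.mem_comap, map_sub, LinearMap.lTensor_tmul,
      TensorProduct.mk_apply, LinearMap.flip_apply]
    apply Submodule.subset_span
    exact Or.inl ⟨ω, η, z, β, hβ, rfl⟩)

/-- Tensoring on the left by `x`: `Ω ⊗_S Ω → Ω ⊗_S Ω ⊗_S Ω`. -/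
def g23 (x : Ω) : BQuot k S →ₗ[k] TQuot k S :=
  Submodule.mapQ _ _ (TensorProduct.mk k Ω (Ω ⊗[k] Ω) x) (by
    rw [balQ, Submodule.span_le]
    rintro w ⟨ω, η, β, hβ, rfl⟩
    simp only [SetLike.mem_coe, Submodule.mem_comap, map_sub, TensorProduct.mk_apply,
      TensorProduct.tmul_sub]
    apply Submodule.subset_span
    exact Or.inr ⟨x, ω, η, β, hβ, rfl⟩)

/-- Multiplication of the first two factors `Ω ⊗_S Ω ⊗_S Ω → Ω ⊗_S Ω`. -/
def m12 : TQuot k S →ₗ[k] BQuot k S :=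
  Submodule.liftQ _ (mkBQ k S ∘ₗ LinearMap.rTensor Ω (LinearMap.mul' k Ω) ∘ₗ
      (TensorProduct.assoc k Ω Ω Ω).symm.toLinearMap) (by
    rw [bal3, Submodule.span_le]
    rintro w (⟨ω, η, ζ, β, hβ, rfl⟩ | ⟨ω, η, ζ, β, hβ, rfl⟩) <;>
      simp only [SetLike.mem_coe, LinearMap.mem_ker, map_sub, LinearMap.comp_apply,
        LinearEquiv.coe_coe, TensorProduct.assoc_symm_tmul, LinearMap.rTensor_tmul,
        LinearMap.mul'_apply, TensorProduct.tmul_sub, map_sub]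
    · rw [mul_assoc, sub_self]
    · rw [mkBQ, Submodule.mkQ_apply, Submodule.mkQ_apply, ← Submodule.Quotient.mk_sub,
        Submodule.Quotient.mk_eq_zero]
      apply Submodule.subset_span
      exact ⟨ω * η, ζ, β, hβ, by rw [mul_assoc]⟩)

/-- Multiplication of the last two factors `Ω ⊗_S Ω ⊗_S Ω → Ω ⊗_S Ω`. -/
def m23 : TQuot k S →ₗ[k] BQuot k S :=
  Submodule.liftQ _ (mkBQ k S ∘ₗ LinearMap.lTensor Ω (LinearMap.mul' k Ω)) (by
    rw [bal3, Submodule.span_le]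
    rintro w (⟨ω, η, ζ, β, hβ, rfl⟩ | ⟨ω, η, ζ, β, hβ, rfl⟩) <;>
      simp only [SetLike.mem_coe, LinearMap.mem_ker, map_sub, LinearMap.comp_apply,
        LinearMap.lTensor_tmul, LinearMap.mul'_apply]
    · rw [mkBQ, Submodule.mkQ_apply, Submodule.mkQ_apply, ← Submodule.Quotient.mk_sub,
        Submodule.Quotient.mk_eq_zero]
      apply Submodule.subset_span
      exact ⟨ω, η * ζ, β, hβ, by rw [mul_assoc]⟩
    · rw [mul_assoc, sub_self])

end BalQ


/-! ### Comodule algebras and Hopf–Galois extensions -/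

/-- A right `H`-comodule algebra structure on `A`. -/
structure ComodAlg (H A : Type) [Ring H] [Bialgebra k H] [Ring A] [Algebra k A] where
  ρ : A →ₗ[k] A ⊗[k] H
  ρ_one : ρ 1 = 1
  ρ_mul : ∀ a b : A, ρ (a * b) = ρ a * ρ b
  counit_ρ : ∀ a : A,
    TensorProduct.rid k A (LinearMap.lTensor A (Coalgebra.counit (R := k) (A := H)) (ρ a)) = a
  coassoc_ρ : ∀ a : A,
    TensorProduct.assoc k A H H (LinearMap.rTensor H ρ (ρ a))
      = LinearMap.lTensor A (Coalgebra.comul (R := k) (A := H)) (ρ a)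

variable {k}

/-- The subalgebra of coinvariant elements `B = A^{co H}`. -/
def ComodAlg.coinv {H A : Type} [Ring H] [Bialgebra k H] [Ring A] [Algebra k A]
    (c : ComodAlg k H A) : Subalgebra k A where
  carrier := {a : A | c.ρ a = a ⊗ₜ[k] (1 : H)}
  mul_mem' := by
    intro a b ha hb
    simp only [Set.mem_setOf_eq] at *
    rw [c.ρ_mul, ha, hb, Algebra.TensorProduct.tmul_mul_tmul, mul_one]
  one_mem' := by
    simpa [Algebra.TensorProduct.one_def] using c.ρ_one
  add_mem' := by
    intro a b ha hb
    simp only [Set.mem_setOf_eq] at *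
    rw [map_add, ha, hb, TensorProduct.add_tmul]
  algebraMap_mem' := by
    intro r
    show c.ρ (algebraMap k A r) = algebraMap k A r ⊗ₜ[k] (1 : H)
    rw [Algebra.algebraMap_eq_smul_one, map_smul, c.ρ_one,
      Algebra.TensorProduct.one_def, smul_tmul']

lemma ComodAlg.mem_coinv {H A : Type} [Ring H] [Bialgebra k H] [Ring A] [Algebra k A]
    (c : ComodAlg k H A) {a : A} : a ∈ c.coinv ↔ c.ρ a = a ⊗ₜ[k] (1 : H) := Iff.rfl

variable (k)

/-- The `B`-balancing relations inside `A ⊗ A`. -/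
def balancer {H A : Type} [Ring H] [Bialgebra k H] [Ring A] [Algebra k A]
    (c : ComodAlg k H A) : Submodule k (A ⊗[k] A) :=
  balQ k (c.coinv : Set A)

/-- The balanced tensor product `A ⊗_B A`. -/
abbrev AtB {H A : Type} [Ring H] [Bialgebra k H] [Ring A] [Algebra k A]
    (c : ComodAlg k H A) : Type :=
  (A ⊗[k] A) ⧸ balancer k c

/-- Projection `A ⊗ A → A ⊗_B A`. -/
def mkAtB {H A : Type} [Ring H] [Bialgebra k H] [Ring A] [Algebra k A]
    (c : ComodAlg k H A) : A ⊗[k] A →ₗ[k] AtB k c :=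
  Submodule.mkQ (balancer k c)

/-- The Galois map before descending to `A ⊗_B A`. -/
def chi0 {H A : Type} [Ring H] [Bialgebra k H] [Ring A] [Algebra k A]
    (c : ComodAlg k H A) : A ⊗[k] A →ₗ[k] A ⊗[k] H :=
  LinearMap.mul' k (A ⊗[k] H) ∘ₗ
    TensorProduct.map (Algebra.TensorProduct.includeLeft (R := k) (S := k)
      (A := A) (B := H)).toLinearMap c.ρ

lemma chi0_tmul {H A : Type} [Ring H] [Bialgebra k H] [Ring A] [Algebra k A]
    (c : ComodAlg k H A) (x y : A) :
    chi0 k c (x ⊗ₜ[k] y) = (x ⊗ₜ[k] (1 : H)) * c.ρ y := by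
  simp [chi0]

lemma balancer_le_ker_chi0 {H A : Type} [Ring H] [Bialgebra k H] [Ring A] [Algebra k A]
    (c : ComodAlg k H A) : balancer k c ≤ LinearMap.ker (chi0 k c) := by
  rw [balancer, balQ, Submodule.span_le]
  rintro x ⟨a, y, b, hb, rfl⟩
  rw [SetLike.mem_coe] at hb
  rw [SetLike.mem_coe, LinearMap.mem_ker, map_sub, chi0_tmul, chi0_tmul,
    c.ρ_mul, c.mem_coinv.mp hb, ← mul_assoc, Algebra.TensorProduct.tmul_mul_tmul,
    mul_one, sub_self]

/-- The canonical Galois map `χ : A ⊗_B A → A ⊗ H`. -/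
def chiQ {H A : Type} [Ring H] [Bialgebra k H] [Ring A] [Algebra k A]
    (c : ComodAlg k H A) : AtB k c →ₗ[k] A ⊗[k] H :=
  Submodule.liftQ (balancer k c) (chi0 k c) (balancer_le_ker_chi0 k c)

/-! ### Faithful flatness over the coinvariant subalgebra -/

/-- `B`-balancing relations in `A ⊗ M` for a left `B`-module `M`. -/
def relBalancer {A : Type} [Ring A] [Algebra k A] (B : Subalgebra k A)
    (M : Type) [AddCommGroup M] [Module k M] [Module B M] [IsScalarTower k B M] :
    Submodule k (A ⊗[k] M) :=
  Submodule.span k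
    {x | ∃ (a : A) (b : B) (m : M), x = (a * (b : A)) ⊗ₜ[k] m - a ⊗ₜ[k] (b • m)}

/-- `A` is a faithfully flat right `B`-module: tensoring over `B` preserves and
reflects injectivity resp. nontriviality. -/
def IsFaithfullyFlatOver {A : Type} [Ring A] [Algebra k A] (B : Subalgebra k A) : Prop :=
  (∀ (M N : Type) [AddCommGroup M] [Module k M] [Module B M] [IsScalarTower k B M]
      [AddCommGroup N] [Module k N] [Module B N] [IsScalarTower k B N]
      (f : M →ₗ[B] N), Function.Injective f →
      ∀ x : A ⊗[k] M,
        LinearMap.lTensor A (f.restrictScalars k) x ∈ relBalancer k B N →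
          x ∈ relBalancer k B M) ∧
  (∀ (M : Type) [AddCommGroup M] [Module k M] [Module B M] [IsScalarTower k B M],
      (⊥ : Submodule k M) ≠ ⊤ → relBalancer k B M ≠ ⊤)

/-- A quantum principal bundle: a faithfully flat Hopf–Galois extension. -/
structure QPB (H A : Type) [Ring H] [HopfAlgebra k H] [Ring A] [Algebra k A]
    extends ComodAlg k H A where
  antipode_bij : Function.Bijective (HopfAlgebra.antipode (R := k) (A := H))
  galois : Function.Bijective (chiQ k toComodAlg)
  ff : IsFaithfullyFlatOver k toComodAlg.coinv


/-- An (ℕ-graded) differential graded algebra over `k`. -/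
structure GDA where
  Ω : Type
  [ring : Ring Ω]
  [alg : Algebra k Ω]
  gr : ℕ → Submodule k Ω
  [graded : GradedAlgebra gr]
  d : Ω →ₗ[k] Ω
  d_d : ∀ x, d (d x) = 0
  d_mem : ∀ n, ∀ x ∈ gr n, d x ∈ gr (n + 1)
  leibniz : ∀ n, ∀ x ∈ gr n, ∀ y, d (x * y) = d x * y + ((-1 : k) ^ n) • (x * d y)

attribute [instance] GDA.ring GDA.alg GDA.graded

/-- A differential calculus on the algebra `A`: a DGA with `Ω⁰ = A` which is
generated in the sense `Ωⁿ = span { a⁰ da¹ ∧ ⋯ ∧ daⁿ }`. -/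
structure DC (A : Type) [Ring A] [Algebra k A] extends GDA k where
  ι : A →ₐ[k] Ω
  ι_inj : Function.Injective ι
  gr_zero : gr 0 = LinearMap.range ι.toLinearMap
  gr_succ : ∀ n : ℕ, gr (n + 1) = Submodule.span k
    {x | ∃ (a : A) (f : Fin (n + 1) → A),
      x = ι a * (List.ofFn fun i => d (ι (f i))).prod}

variable {k}

/-- The Koszul sign operator `J x = (-1)^{|x|} x`. -/
def GDA.J (D : GDA k) : D.Ω →ₗ[k] D.Ω :=
  (DirectSum.toModule k ℕ D.Ω fun n => ((-1 : k) ^ n) • (D.gr n).subtype) ∘ₗ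
    (DirectSum.decomposeLinearEquiv D.gr).toLinearMap

/-- The Koszul braiding flip `x ⊗ y ↦ (-1)^{|x||y|} y ⊗ x`. -/
def koszulFlip (D E : GDA k) : D.Ω ⊗[k] E.Ω →ₗ[k] E.Ω ⊗[k] D.Ω :=
  (DirectSum.toModule k ℕ (E.Ω ⊗[k] D.Ω) fun n =>
      (TensorProduct.comm k D.Ω E.Ω).toLinearMap ∘ₗ
        TensorProduct.map (D.gr n).subtype (E.J ^ n)) ∘ₗ
    (TensorProduct.directSumLeft k k (fun n => D.gr n) E.Ω).toLinearMap ∘ₗ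
    LinearMap.rTensor E.Ω (DirectSum.decomposeLinearEquiv D.gr).toLinearMap

/-- Multiplication of the graded (Koszul-signed) tensor product algebra
`Ω(D) ⊗ Ω(E)`: `(x ⊗ h)(y ⊗ g) = (-1)^{|h||y|} (xy) ⊗ (hg)`. -/
def gmulT (D E : GDA k) :
    (D.Ω ⊗[k] E.Ω) ⊗[k] (D.Ω ⊗[k] E.Ω) →ₗ[k] D.Ω ⊗[k] E.Ω :=
  TensorProduct.map (LinearMap.mul' k D.Ω) (LinearMap.mul' k E.Ω) ∘ₗ
    (TensorProduct.assoc k D.Ω D.Ω (E.Ω ⊗[k] E.Ω)).symm.toLinearMap ∘ₗ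
    LinearMap.lTensor D.Ω (TensorProduct.assoc k D.Ω E.Ω E.Ω).toLinearMap ∘ₗ
    LinearMap.lTensor D.Ω (LinearMap.rTensor E.Ω (koszulFlip E D)) ∘ₗ
    LinearMap.lTensor D.Ω (TensorProduct.assoc k E.Ω D.Ω E.Ω).symm.toLinearMap ∘ₗ
    (TensorProduct.assoc k D.Ω E.Ω (D.Ω ⊗[k] E.Ω)).toLinearMap

/-- The differential of the graded tensor product:
`d⊗(x ⊗ y) = dx ⊗ y + (-1)^{|x|} x ⊗ dy`. -/
def dT (D E : GDA k) : D.Ω ⊗[k] E.Ω →ₗ[k] D.Ω ⊗[k] E.Ω :=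
  LinearMap.rTensor E.Ω D.d + TensorProduct.map D.J E.d

/-- Projection of a differential calculus onto its degree-zero part `A`. -/
def DC.p0 {A : Type} [Ring A] [Algebra k A] (D : DC k A) : D.Ω →ₗ[k] A :=
  (LinearEquiv.ofInjective D.ι.toLinearMap D.ι_inj).symm.toLinearMap ∘ₗ
    (LinearEquiv.ofEq _ _ D.gr_zero).toLinearMap ∘ₗ
    DirectSum.component k ℕ (fun n => D.gr n) 0 ∘ₗ
    (DirectSum.decomposeLinearEquiv D.gr).toLinearMap


variable (k)

/-! ### First order differential calculi -/

/-- A first order differential calculus `(Ω¹(A), d)` on `A`, realized on the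
`A`-bimodule `V`. -/
structure FODC (A V : Type) [Ring A] [Algebra k A] [AddCommGroup V] [Module k V] where
  lact : A →ₗ[k] V →ₗ[k] V
  ract : A →ₗ[k] V →ₗ[k] V
  lact_one : lact 1 = LinearMap.id
  lact_mul : ∀ a b : A, lact (a * b) = lact a ∘ₗ lact b
  ract_one : ract 1 = LinearMap.id
  ract_mul : ∀ a b : A, ract (a * b) = ract b ∘ₗ ract a
  lr_comm : ∀ (a b : A) (v : V), lact a (ract b v) = ract b (lact a v)
  d : A →ₗ[k] V
  leibniz : ∀ a b : A, d (a * b) = lact a (d b) + ract b (d a)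
  span_eq : Submodule.span k {x : V | ∃ a b : A, x = lact a (d b)} = ⊤

/-- Auxiliary action of `A ⊗ H` on `V ⊗ H`:
`(a ⊗ h) ⋅ (v ⊗ g) = (act a v) ⊗ (mulH h g)`. -/
def actT {A H V : Type} [AddCommGroup A] [Module k A] [AddCommGroup H] [Module k H]
    [AddCommGroup V] [Module k V]
    (act : A →ₗ[k] V →ₗ[k] V) (mulH : H →ₗ[k] H →ₗ[k] H) :
    A ⊗[k] H →ₗ[k] (V ⊗[k] H) →ₗ[k] V ⊗[k] H :=
  TensorProduct.lift ((TensorProduct.mapBilinear (RingHom.id k) V H V H).compl₁₂ act mulH)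

/-- Auxiliary action of `H ⊗ A` on `H ⊗ V`:
`(h ⊗ a) ⋅ (g ⊗ v) = (mulH h g) ⊗ (act a v)`. -/
def actTL {A H V : Type} [AddCommGroup A] [Module k A] [AddCommGroup H] [Module k H]
    [AddCommGroup V] [Module k V]
    (act : A →ₗ[k] V →ₗ[k] V) (mulH : H →ₗ[k] H →ₗ[k] H) :
    H ⊗[k] A →ₗ[k] (H ⊗[k] V) →ₗ[k] H ⊗[k] V :=
  TensorProduct.lift ((TensorProduct.mapBilinear (RingHom.id k) H V H V).compl₁₂ mulH act)

section Covariant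
variable {H A : Type} [Ring H] [Bialgebra k H] [Ring A] [Algebra k A]

/-- A right `H`-covariant FODC on the right `H`-comodule algebra `A`. -/
structure RCovFODC (c : ComodAlg k H A) (V : Type) [AddCommGroup V] [Module k V]
    extends FODC k A V where
  ρV : V →ₗ[k] V ⊗[k] H
  ρV_counit : ∀ v, TensorProduct.rid k V
    (LinearMap.lTensor V (Coalgebra.counit (R := k) (A := H)) (ρV v)) = v
  ρV_coassoc : ∀ v, TensorProduct.assoc k V H H (LinearMap.rTensor H ρV (ρV v))
    = LinearMap.lTensor V (Coalgebra.comul (R := k) (A := H)) (ρV v)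
  ρV_d : ∀ a : A, ρV (d a) = LinearMap.rTensor H d (c.ρ a)
  ρV_l : ∀ (a : A) (v : V),
    ρV (lact a v) = actT k lact (LinearMap.mul k H) (c.ρ a) (ρV v)
  ρV_r : ∀ (a : A) (v : V),
    ρV (ract a v) = actT k ract ((LinearMap.mul k H).flip) (c.ρ a) (ρV v)

/-- A left `H`-covariant FODC on the Hopf algebra `H` itself. -/
structure LCovFODC (V : Type) [AddCommGroup V] [Module k V]
    extends FODC k H V where
  lam : V →ₗ[k] H ⊗[k] V
  lam_counit : ∀ v, TensorProduct.lid k V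
    (LinearMap.rTensor V (Coalgebra.counit (R := k) (A := H)) (lam v)) = v
  lam_coassoc : ∀ v, (TensorProduct.assoc k H H V).symm
      (LinearMap.lTensor H lam (lam v))
    = LinearMap.rTensor V (Coalgebra.comul (R := k) (A := H)) (lam v)
  lam_d : ∀ h : H, lam (d h) = LinearMap.lTensor H d (Coalgebra.comul (R := k) h)
  lam_l : ∀ (h : H) (v : V), lam (lact h v)
    = actTL k lact (LinearMap.mul k H) (Coalgebra.comul (R := k) h) (lam v)
  lam_r : ∀ (h : H) (v : V), lam (ract h v)
    = actTL k ract ((LinearMap.mul k H).flip) (Coalgebra.comul (R := k) h) (lam v)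

/-- The right coaction data making a left covariant FODC on `H` bicovariant. -/
structure BicovStruct {V : Type} [AddCommGroup V] [Module k V]
    (L : LCovFODC k (H := H) V) where
  ρV : V →ₗ[k] V ⊗[k] H
  ρV_counit : ∀ v, TensorProduct.rid k V
    (LinearMap.lTensor V (Coalgebra.counit (R := k) (A := H)) (ρV v)) = v
  ρV_coassoc : ∀ v, TensorProduct.assoc k V H H (LinearMap.rTensor H ρV (ρV v))
    = LinearMap.lTensor V (Coalgebra.comul (R := k) (A := H)) (ρV v)
  ρV_d : ∀ h : H, ρV (L.d h) = LinearMap.rTensor H L.d (Coalgebra.comul (R := k) h)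
  ρV_l : ∀ (h : H) (v : V),
    ρV (L.lact h v) = actT k L.lact (LinearMap.mul k H) (Coalgebra.comul (R := k) h) (ρV v)
  ρV_r : ∀ (h : H) (v : V),
    ρV (L.ract h v) = actT k L.ract ((LinearMap.mul k H).flip) (Coalgebra.comul (R := k) h) (ρV v)
  bicomod : ∀ v, LinearMap.lTensor H ρV (L.lam v)
    = TensorProduct.assoc k H V H (LinearMap.rTensor H L.lam (ρV v))

end Covariant

/-! ### Maximal prolongations -/

section MaxProl
variable {k}
variable {A : Type} [Ring A] [Algebra k A]

/-- A realization of a DC as an extension of a given FODC. -/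
structure ExtendsFODC {V : Type} [AddCommGroup V] [Module k V]
    (D : DC k A) (F : FODC k A V) where
  j : V →ₗ[k] D.Ω
  j_inj : Function.Injective j
  j_range : LinearMap.range j = D.gr 1
  j_d : ∀ a : A, j (F.d a) = D.d (D.ι a)
  j_l : ∀ (a : A) (v : V), j (F.lact a v) = D.ι a * j v
  j_r : ∀ (a : A) (v : V), j (F.ract a v) = j v * D.ι a

/-- `D` is the maximal prolongation of the FODC `F`: it extends `F` and every
other extension is a quotient of it. -/
def IsMaxProlongation {V : Type} [AddCommGroup V] [Module k V]
    (D : DC k A) (F : FODC k A V) : Prop :=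
  Nonempty (ExtendsFODC D F) ∧
  ∀ (D' : DC k A) (e : ExtendsFODC D F) (e' : ExtendsFODC D' F),
    ∃ φ : D.Ω →ₐ[k] D'.Ω, Function.Surjective φ ∧
      (∀ a : A, φ (D.ι a) = D'.ι a) ∧
      (∀ x, φ (D.d x) = D'.d (φ x)) ∧
      (∀ n, ∀ x ∈ D.gr n, φ x ∈ D'.gr n) ∧
      (∀ v : V, φ (e.j v) = e'.j v)

end MaxProl

/-! ### The adjoint coaction and graded Hopf calculi -/

section HopfSide
variable {k}
variable {H : Type} [Ring H] [HopfAlgebra k H]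

/-- The (right) adjoint coaction `Ad(h) = h₂ ⊗ S(h₁) h₃`. -/
def AdMap : H →ₗ[k] H ⊗[k] H :=
  LinearMap.lTensor H (LinearMap.mul' k H) ∘ₗ
    (TensorProduct.assoc k H H H).toLinearMap ∘ₗ
    LinearMap.rTensor H ((TensorProduct.comm k H H).toLinearMap ∘ₗ
      LinearMap.rTensor H (HopfAlgebra.antipode (R := k))) ∘ₗ
    LinearMap.rTensor H (Coalgebra.comul (R := k)) ∘ₗ
    Coalgebra.comul (R := k)

variable (k) in
/-- A differential calculus on `H` which is a differential graded Hopf algebra,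
as is the case for the maximal prolongation of a bicovariant FODC. -/
structure DGHopf extends DC k H where
  Δg : Ω →ₗ[k] Ω ⊗[k] Ω
  εg : Ω →ₗ[k] k
  Sg : Ω →ₗ[k] Ω
  Δg_one : Δg 1 = 1 ⊗ₜ[k] 1
  Δg_mul : ∀ x y : Ω, Δg (x * y) = gmulT toGDA toGDA (Δg x ⊗ₜ[k] Δg y)
  Δg_d : ∀ x : Ω, Δg (d x) = dT toGDA toGDA (Δg x)
  Δg_zero : ∀ h : H, Δg (ι h)
    = TensorProduct.map ι.toLinearMap ι.toLinearMap (Coalgebra.comul (R := k) h)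
  Δg_coassoc : ∀ x : Ω, TensorProduct.assoc k Ω Ω Ω (LinearMap.rTensor Ω Δg (Δg x))
    = LinearMap.lTensor Ω Δg (Δg x)
  Δg_counit_l : ∀ x : Ω, TensorProduct.lid k Ω (LinearMap.rTensor Ω εg (Δg x)) = x
  Δg_counit_r : ∀ x : Ω, TensorProduct.rid k Ω (LinearMap.lTensor Ω εg (Δg x)) = x
  εg_zero : ∀ h : H, εg (ι h) = Coalgebra.counit (R := k) h
  εg_pos : ∀ n, ∀ x ∈ gr (n + 1), εg x = 0
  Sg_antipode_l : ∀ x : Ω,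
    LinearMap.mul' k Ω (TensorProduct.map Sg LinearMap.id (Δg x)) = algebraMap k Ω (εg x)
  Sg_antipode_r : ∀ x : Ω,
    LinearMap.mul' k Ω (TensorProduct.map LinearMap.id Sg (Δg x)) = algebraMap k Ω (εg x)
  Sg_zero : ∀ h : H, Sg (ι h) = ι (HopfAlgebra.antipode (R := k) h)
  Sg_d : ∀ x : Ω, Sg (d x) = d (Sg x)
  Δg_grade : ∀ n, ∀ x ∈ gr n, Δg x ∈
    ⨆ p : {p : ℕ × ℕ // p.1 + p.2 = n},
      LinearMap.range (TensorProduct.map (gr p.1.1).subtype (gr p.1.2).subtype)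

namespace DGHopf

variable (D : DGHopf k (H := H))

/-- The left coaction of `H` on `Ω•(H)`, i.e. the degree `(0,•)` part of `Δg`. -/
def lamG : D.Ω →ₗ[k] H ⊗[k] D.Ω :=
  TensorProduct.map D.p0 LinearMap.id ∘ₗ D.Δg

/-- The left coinvariant forms `Λ• ⊆ Ω•(H)`. -/
def lamSub : Submodule k D.Ω :=
  LinearMap.ker (D.lamG - TensorProduct.mk k H D.Ω 1)

/-- The left coinvariant one-forms `Λ¹`. -/
def lam1 : Submodule k D.Ω := D.lamSub ⊓ D.gr 1

/-- The (quantum) Cartan–Maurer form `ϖ(h) = S(h₁) d(h₂)`, extended to `H`. -/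
def varpi : H →ₗ[k] D.Ω :=
  TensorProduct.lift
    (((LinearMap.mul k D.Ω ∘ₗ D.ι.toLinearMap ∘ₗ
        (HopfAlgebra.antipode (R := k))).compl₂ (D.d ∘ₗ D.ι.toLinearMap))) ∘ₗ
    Coalgebra.comul (R := k)

/-- The graded adjoint coaction
`Ad•(ω) = (-1)^{|ω₁||ω₂|} ω₂ ⊗ S•(ω₁) ∧ ω₃`. -/
def AdG : D.Ω →ₗ[k] D.Ω ⊗[k] D.Ω :=
  LinearMap.lTensor D.Ω (LinearMap.mul' k D.Ω ∘ₗ LinearMap.rTensor D.Ω D.Sg) ∘ₗ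
    (TensorProduct.assoc k D.Ω D.Ω D.Ω).toLinearMap ∘ₗ
    LinearMap.rTensor D.Ω (koszulFlip D.toGDA D.toGDA) ∘ₗ
    LinearMap.rTensor D.Ω D.Δg ∘ₗ D.Δg

end DGHopf
end HopfSide

/-! ### Complete calculi -/

section Complete
variable {k}
variable {H A : Type} [Ring H] [HopfAlgebra k H] [Ring A] [Algebra k A]

variable (k) in
/-- A complete calculus: the coaction of a comodule algebra extends to a
morphism of differential graded algebras `Ω•(A) → Ω•(A) ⊗ Ω•(H)`. -/
structure Complete (c : ComodAlg k H A) (DA : DC k A) (DH : DGHopf k (H := H)) where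
  Δc : DA.Ω →ₗ[k] DA.Ω ⊗[k] DH.Ω
  Δc_one : Δc 1 = 1 ⊗ₜ[k] 1
  Δc_mul : ∀ x y : DA.Ω, Δc (x * y) = gmulT DA.toGDA DH.toGDA (Δc x ⊗ₜ[k] Δc y)
  Δc_d : ∀ x : DA.Ω, Δc (DA.d x) = dT DA.toGDA DH.toGDA (Δc x)
  Δc_zero : ∀ a : A, Δc (DA.ι a)
    = TensorProduct.map DA.ι.toLinearMap DH.ι.toLinearMap (c.ρ a)
  Δc_grade : ∀ n, ∀ x ∈ DA.gr n, Δc x ∈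
    ⨆ p : {p : ℕ × ℕ // p.1 + p.2 = n},
      LinearMap.range (TensorProduct.map (DA.gr p.1.1).subtype (DH.gr p.1.2).subtype)

namespace Complete

variable {c : ComodAlg k H A} {DA : DC k A} {DH : DGHopf k (H := H)}
variable (E : Complete k c DA DH)

/-- The first order part of the extended coaction: a right `H`-coaction on `Ω•(A)`. -/
def ρΩ : DA.Ω →ₗ[k] DA.Ω ⊗[k] H :=
  LinearMap.lTensor DA.Ω DH.p0 ∘ₗ E.Δc

/-- The basic forms `Ω•(B) = Ω•(A)^{co Ω•(H)}`. -/
def basic : Submodule k DA.Ω :=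
  LinearMap.ker (E.Δc - (TensorProduct.mk k DA.Ω DH.Ω).flip 1)

/-- The horizontal forms `hor• = (Δ•)⁻¹(Ω•(A) ⊗ H)`. -/
def hor : Submodule k DA.Ω :=
  Submodule.comap E.Δc (LinearMap.range (LinearMap.lTensor DA.Ω DH.ι.toLinearMap))

end Complete

/-- The map `κ : a ⊗ ω ↦ a₀ ⊗ S(a₁) ω`. -/
def kappa (c : ComodAlg k H A) (DH : DGHopf k (H := H)) :
    A ⊗[k] DH.Ω →ₗ[k] A ⊗[k] DH.Ω :=
  LinearMap.lTensor A (LinearMap.mul' k DH.Ω ∘ₗ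
      LinearMap.rTensor DH.Ω (DH.ι.toLinearMap ∘ₗ HopfAlgebra.antipode (R := k))) ∘ₗ
    (TensorProduct.assoc k A H DH.Ω).toLinearMap ∘ₗ
    LinearMap.rTensor DH.Ω c.ρ

namespace Complete
variable {c : ComodAlg k H A} {DA : DC k A} {DH : DGHopf k (H := H)}
variable (E : Complete k c DA DH)

/-- The vertical projection `π_v : Ω•(A) → A ⊗ Λ• ⊆ A ⊗ Ω•(H)`. -/
def piv : DA.Ω →ₗ[k] A ⊗[k] DH.Ω :=
  kappa c DH ∘ₗ TensorProduct.map DA.p0 LinearMap.id ∘ₗ E.Δc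

end Complete
end Complete

/-! ### The Đurđević braiding via the Galois map -/

section Durd
variable {k}
variable {H A : Type} [Ring H] [HopfAlgebra k H] [Ring A] [Algebra k A]

/-- The map `a ⊗ c ↦ a₀ c ⊗ a₁`, i.e. `χ ∘ σ` for the Đurđević braiding. -/
def durdGalois (c : ComodAlg k H A) : A ⊗[k] A →ₗ[k] A ⊗[k] H :=
  LinearMap.rTensor H (LinearMap.mul' k A) ∘ₗ
    (TensorProduct.assoc k A A H).symm.toLinearMap ∘ₗ
    LinearMap.lTensor A (TensorProduct.comm k H A).toLinearMap ∘ₗ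
    (TensorProduct.assoc k A H A).toLinearMap ∘ₗ
    LinearMap.rTensor A c.ρ

/-- The graded analogue `ω ⊗ η ↦ (-1)^{|η||ω₁|} (ω₀ ∧ η) ⊗ ω₁`, i.e.
`χ• ∘ σ•` for the extended Đurđević braiding. -/
def durdGaloisG {c : ComodAlg k H A} {DA : DC k A} {DH : DGHopf k (H := H)}
    (E : Complete k c DA DH) : DA.Ω ⊗[k] DA.Ω →ₗ[k] DA.Ω ⊗[k] DH.Ω :=
  LinearMap.rTensor DH.Ω (LinearMap.mul' k DA.Ω) ∘ₗ
    (TensorProduct.assoc k DA.Ω DA.Ω DH.Ω).symm.toLinearMap ∘ₗ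
    LinearMap.lTensor DA.Ω (koszulFlip DH.toGDA DA.toGDA) ∘ₗ
    (TensorProduct.assoc k DA.Ω DH.Ω DA.Ω).toLinearMap ∘ₗ
    LinearMap.rTensor DA.Ω E.Δc

end Durd

/-! ### Gauge transformations and connections -/

section Gauge
variable {k}
variable {H A : Type} [Ring H] [HopfAlgebra k H] [Ring A] [Algebra k A]

/-- A gauge transformation: unital, convolution invertible, and colinear with
respect to the adjoint coaction. -/
def IsGauge (c : ComodAlg k H A) (f : H →ₗ[k] A) : Prop :=
  IsConvInvertible k f ∧ f 1 = 1 ∧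
    ∀ h : H, c.ρ (f h) = LinearMap.rTensor H f (AdMap h)

/-- A vertical automorphism: a unital left `B`-linear right `H`-colinear
bijection of `A`. -/
def IsVertAut (c : ComodAlg k H A) (F : A →ₗ[k] A) : Prop :=
  Function.Bijective F ∧ (∀ b ∈ c.coinv, ∀ a, F (b * a) = b * F a) ∧ F 1 = 1 ∧
    ∀ a, c.ρ (F a) = LinearMap.rTensor H F (c.ρ a)

variable {DA : DC k A} {DH : DGHopf k (H := H)}

/-- Convolution product with respect to the graded coproduct. -/
def convG (DH : DGHopf k (H := H)) {P : Type} [Ring P] [Algebra k P]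
    (f g : DH.Ω →ₗ[k] P) : DH.Ω →ₗ[k] P :=
  LinearMap.mul' k P ∘ₗ TensorProduct.map f g ∘ₗ DH.Δg

/-- Convolution unit with respect to the graded counit. -/
def convGUnit (DH : DGHopf k (H := H)) {P : Type} [Ring P] [Algebra k P] :
    DH.Ω →ₗ[k] P :=
  Algebra.linearMap k P ∘ₗ DH.εg

/-- A map `Ω•(H) → Ω•(A)` of degree zero. -/
def IsDeg0 (DH : DGHopf k (H := H)) (DA : DC k A) (f : DH.Ω →ₗ[k] DA.Ω) : Prop :=
  ∀ n, ∀ x ∈ DH.gr n, f x ∈ DA.gr n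

/-- The degree-zero component `f⁰ : H → A` of a degree-zero map. -/
def deg0Part (DH : DGHopf k (H := H)) (DA : DC k A) (f : DH.Ω →ₗ[k] DA.Ω) :
    H →ₗ[k] A :=
  DA.p0 ∘ₗ f ∘ₗ DH.ι.toLinearMap

section WithComplete
variable {c : ComodAlg k H A} (E : Complete k c DA DH)

/-- A graded gauge transformation. -/
def IsGradedGauge (f : DH.Ω →ₗ[k] DA.Ω) : Prop :=
  IsDeg0 DH DA f ∧
  (∃ g : DH.Ω →ₗ[k] DA.Ω, IsDeg0 DH DA g ∧
      convG DH f g = convGUnit DH ∧ convG DH g f = convGUnit DH) ∧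
  f 1 = 1 ∧
  ∀ ω, E.Δc (f ω) = LinearMap.rTensor DH.Ω f (DH.AdG ω)

/-- A graded vertical automorphism. -/
def IsGradedVertAut (F : DA.Ω →ₗ[k] DA.Ω) : Prop :=
  (∀ n, ∀ x ∈ DA.gr n, F x ∈ DA.gr n) ∧ Function.Bijective F ∧
  (∀ β ∈ E.basic, ∀ x, F (β * x) = β * F x) ∧ F 1 = 1 ∧
  ∀ x, E.Δc (F x) = LinearMap.rTensor DH.Ω F (E.Δc x)

/-- The right hand side `h ↦ s(ϖ(π_ε(h₂))) ⊗ S(h₁)h₃` of the colinearity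
condition for connection 1-forms. -/
def connRHSg (s : DH.Ω →ₗ[k] DA.Ω) : H →ₗ[k] DA.Ω ⊗[k] H :=
  TensorProduct.map (s ∘ₗ DH.varpi)
      (LinearMap.mul' k H ∘ₗ LinearMap.rTensor H (HopfAlgebra.antipode (R := k))) ∘ₗ
    (TensorProduct.assoc k H H H).toLinearMap ∘ₗ
    LinearMap.rTensor H (TensorProduct.comm k H H).toLinearMap ∘ₗ
    LinearMap.rTensor H (Coalgebra.comul (R := k)) ∘ₗ
    Coalgebra.comul (R := k)

/-- A connection 1-form on a quantum principal bundle with complete calculus. -/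
def IsConnForm (s : DH.Ω →ₗ[k] DA.Ω) : Prop :=
  (∀ θ ∈ DH.lam1, s θ ∈ DA.gr 1) ∧
  (∀ h : H, E.ρΩ (s (DH.varpi h)) = connRHSg s h) ∧
  (∀ θ ∈ DH.lam1, E.piv (s θ) = (1 : A) ⊗ₜ[k] θ)

/-- The curvature `R_s(h) = d s(ϖ(h)) + s(ϖ(π_ε(h₁))) ∧ s(ϖ(π_ε(h₂)))`. -/
def curvature (s : DH.Ω →ₗ[k] DA.Ω) : H →ₗ[k] DA.Ω :=
  DA.d ∘ₗ s ∘ₗ DH.varpi +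
    LinearMap.mul' k DA.Ω ∘ₗ
      TensorProduct.map (s ∘ₗ DH.varpi) (s ∘ₗ DH.varpi) ∘ₗ Coalgebra.comul (R := k)

/-- The `Ω•(B)`-balancing relations in `Ω•(A) ⊗ Ω•(A)`. -/
def basicBalancer : Submodule k (DA.Ω ⊗[k] DA.Ω) :=
  balQ k (E.basic : Set DA.Ω)

/-- The graded Galois map `χ• : ω ⊗ η ↦ ω ∧ η₍₀₎ ⊗ η₍₁₎` before descending to
`Ω•(A) ⊗_{Ω•(B)} Ω•(A)`. -/
def chi0g : DA.Ω ⊗[k] DA.Ω →ₗ[k] DA.Ω ⊗[k] DH.Ω :=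
  gmulT DA.toGDA DH.toGDA ∘ₗ
    TensorProduct.map ((TensorProduct.mk k DA.Ω DH.Ω).flip 1) E.Δc

end WithComplete
end Gauge

/-! ### First-order machinery -/

section FirstOrder
variable {k}
variable {H A : Type} [Ring H] [HopfAlgebra k H] [Ring A] [Algebra k A]
variable {VA VH : Type} [AddCommGroup VA] [Module k VA] [AddCommGroup VH] [Module k VH]
variable {c : ComodAlg k H A}

/-- The left coinvariant elements `Λ¹` of a left covariant FODC on `H`. -/
def Lam1 (L : LCovFODC k (H := H) VH) : Submodule k VH :=
  LinearMap.ker (L.lam - TensorProduct.mk k H VH 1)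

/-- The Cartan–Maurer form `ϖ(h) = S(h₁) ⋅ d(h₂)` of a left covariant FODC. -/
def varpi1 (L : LCovFODC k (H := H) VH) : H →ₗ[k] VH :=
  TensorProduct.lift
    ((L.lact ∘ₗ HopfAlgebra.antipode (R := k)).compl₂ L.d) ∘ₗ
    Coalgebra.comul (R := k)

/-- The map `a' ↦ a'₀ ⊗ S(a'₁) ⋅ d(a'₂)`. -/
def nuMap (c : ComodAlg k H A) (L : LCovFODC k (H := H) VH) : A →ₗ[k] A ⊗[k] VH :=
  LinearMap.lTensor A
      (TensorProduct.lift ((L.lact ∘ₗ HopfAlgebra.antipode (R := k)).compl₂ L.d)) ∘ₗ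
    (TensorProduct.assoc k A H H).toLinearMap ∘ₗ
    LinearMap.rTensor H c.ρ ∘ₗ c.ρ

/-- A first order complete calculus: the vertical projection
`π_v(a ⋅ d a') = a a'₀ ⊗ S(a'₁) d a'₂` is well defined. -/
structure FOComplete (c : ComodAlg k H A) (FA : RCovFODC k c VA)
    (LH : LCovFODC k (H := H) VH) where
  pv : VA →ₗ[k] A ⊗[k] VH
  pv_eq : ∀ a a' : A, pv (FA.lact a (FA.d a'))
    = LinearMap.rTensor VH (LinearMap.mulLeft k a) (nuMap c LH a')

/-- Colinearity right hand side for first-order connection forms. -/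
def connRHS1 (LH : LCovFODC k (H := H) VH) (_FA : RCovFODC k c VA)
    (s : VH →ₗ[k] VA) : H →ₗ[k] VA ⊗[k] H :=
  TensorProduct.map (s ∘ₗ varpi1 LH)
      (LinearMap.mul' k H ∘ₗ LinearMap.rTensor H (HopfAlgebra.antipode (R := k))) ∘ₗ
    (TensorProduct.assoc k H H H).toLinearMap ∘ₗ
    LinearMap.rTensor H (TensorProduct.comm k H H).toLinearMap ∘ₗ
    LinearMap.rTensor H (Coalgebra.comul (R := k)) ∘ₗ
    Coalgebra.comul (R := k)

/-- A connection 1-form for a first order complete calculus. -/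
def IsConnForm1 {c : ComodAlg k H A} (FA : RCovFODC k c VA)
    (LH : LCovFODC k (H := H) VH) (E : FOComplete c FA LH)
    (s : VH →ₗ[k] VA) : Prop :=
  (∀ h : H, FA.ρV (s (varpi1 LH h)) = connRHS1 LH FA s h) ∧
  (∀ θ ∈ Lam1 LH, E.pv (s θ) = (1 : A) ⊗ₜ[k] θ)

end FirstOrder

/-! ### The regular comodule algebra and bicovariant prolongations -/

section Reg
variable {k}
variable (H : Type) [Ring H] [HopfAlgebra k H]

variable (k) in
/-- `H` as a right comodule algebra over itself via the comultiplication. -/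
def regCA : ComodAlg k H H where
  ρ := Coalgebra.comul
  ρ_one := Bialgebra.comul_one
  ρ_mul := fun a b => Bialgebra.comul_mul a b
  counit_ρ := by
    intro a
    have h := LinearMap.congr_fun
      (Coalgebra.lTensor_counit_comp_comul (R := k) (A := H)) a
    simp only [LinearMap.comp_apply] at h
    rw [h]
    simp
  coassoc_ρ := by
    intro a
    have h := LinearMap.congr_fun (Coalgebra.coassoc (R := k) (A := H)) a
    simp only [LinearMap.comp_apply, LinearEquiv.coe_coe] at h
    exact h

variable {H} in
/-- `D` is the maximal prolongation of some bicovariant FODC on `H`. -/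
def DGHopf.IsMaxProlOfBicov (D : DGHopf k (H := H)) : Prop :=
  ∃ (V : Type) (_ : AddCommGroup V) (_ : Module k V) (L : LCovFODC k (H := H) V),
    Nonempty (BicovStruct k L) ∧ IsMaxProlongation D.toDC L.toFODC

end Reg


set_option synthInstance.maxHeartbeats 1000000
set_option maxHeartbeats 1000000

section Aux13
open Coalgebra
variable {k}

section ConvTool
variable {C : Type} [AddCommGroup C] [Module k C] [Coalgebra k C]
variable {P Q : Type} [Ring P] [Algebra k P] [Ring Q] [Algebra k Q]

lemma conv_apply_repr (f g : C →ₗ[k] P) {x : C} (r : Coalgebra.Repr k x (C × C)) :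
    conv k f g x = ∑ i ∈ r.index, f (r.left i) * g (r.right i) := by
  simp only [conv, LinearMap.comp_apply, ← r.eq, map_sum, TensorProduct.map_tmul,
    LinearMap.mul'_apply]

lemma convUnit_apply (x : C) :
    (convUnit k (C := C) (A := P)) x = algebraMap k P (Coalgebra.counit (R := k) x) := rfl

lemma conv_unit_left (f : C →ₗ[k] P) : conv k (convUnit k) f = f := by
  ext x
  rw [conv_apply_repr _ _ (ℛ k x)]
  have h := Coalgebra.sum_counit_tmul_eq (R := k) (ℛ k x)
  apply_fun (LinearMap.mul' k P ∘ₗ TensorProduct.map (Algebra.linearMap k P) f) at h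
  simp only [map_sum, LinearMap.comp_apply, TensorProduct.map_tmul, LinearMap.mul'_apply,
    Algebra.linearMap_apply, map_one, one_mul] at h
  simpa [convUnit_apply] using h

lemma conv_unit_right (f : C →ₗ[k] P) : conv k f (convUnit k) = f := by
  ext x
  rw [conv_apply_repr _ _ (ℛ k x)]
  have h := Coalgebra.sum_tmul_counit_eq (R := k) (ℛ k x)
  apply_fun (LinearMap.mul' k P ∘ₗ TensorProduct.map f (Algebra.linearMap k P)) at h
  simp only [map_sum, LinearMap.comp_apply, TensorProduct.map_tmul, LinearMap.mul'_apply,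
    Algebra.linearMap_apply, map_one, mul_one] at h
  simpa [convUnit_apply] using h

lemma conv_assoc (f g h : C →ₗ[k] P) :
    conv k (conv k f g) h = conv k f (conv k g h) := by
  ext x
  have key := Coalgebra.sum_map_tmul_tmul_eq (R := k) f g h x (repr := ℛ k x)
    (a₁ := fun i => ℛ k ((ℛ k x).left i)) (a₂ := fun i => ℛ k ((ℛ k x).right i))
  apply_fun (LinearMap.mul' k P ∘ₗ LinearMap.lTensor P (LinearMap.mul' k P)) at key
  simp only [map_sum, LinearMap.comp_apply, LinearMap.lTensor_tmul, LinearMap.mul'_apply] at key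
  rw [conv_apply_repr _ _ (ℛ k x), conv_apply_repr _ _ (ℛ k x)]
  calc ∑ i ∈ (ℛ k x).index, conv k f g ((ℛ k x).left i) * h ((ℛ k x).right i)
      = ∑ i ∈ (ℛ k x).index, ∑ j ∈ (ℛ k ((ℛ k x).left i)).index,
          f ((ℛ k ((ℛ k x).left i)).left j) * ((g ((ℛ k ((ℛ k x).left i)).right j))
            * h ((ℛ k x).right i)) := by
        refine Finset.sum_congr rfl fun i _ => ?_
        rw [conv_apply_repr _ _ (ℛ k ((ℛ k x).left i)), Finset.sum_mul]
        exact Finset.sum_congr rfl fun j _ => mul_assoc _ _ _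
    _ = ∑ i ∈ (ℛ k x).index, ∑ j ∈ (ℛ k ((ℛ k x).right i)).index,
          f ((ℛ k x).left i) * (g ((ℛ k ((ℛ k x).right i)).left j)
            * h ((ℛ k ((ℛ k x).right i)).right j)) := key.symm
    _ = ∑ i ∈ (ℛ k x).index, f ((ℛ k x).left i) * conv k g h ((ℛ k x).right i) := by
        refine Finset.sum_congr rfl fun i _ => ?_
        rw [conv_apply_repr _ _ (ℛ k ((ℛ k x).right i)), Finset.mul_sum]

lemma algHom_comp_conv (φ : P →ₐ[k] Q) (f g : C →ₗ[k] P) :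
    φ.toLinearMap ∘ₗ conv k f g = conv k (φ.toLinearMap ∘ₗ f) (φ.toLinearMap ∘ₗ g) := by
  ext x
  rw [LinearMap.comp_apply, conv_apply_repr _ _ (ℛ k x), conv_apply_repr _ _ (ℛ k x)]
  simp [map_sum]

lemma algHom_comp_convUnit (φ : P →ₐ[k] Q) :
    φ.toLinearMap ∘ₗ (convUnit k (C := C) (A := P)) = convUnit k := by
  ext x
  simp [convUnit_apply, AlgHom.commutes]

lemma conv_inv_unique {f g g' : C →ₗ[k] P} (h1 : conv k f g = convUnit k)
    (h2 : conv k g' f = convUnit k) : g' = g := by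
  have := congrArg (conv k g') h1
  rw [← conv_assoc, h2, conv_unit_left, conv_unit_right] at this
  exact this.symm

end ConvTool

section HopfTool
variable {H : Type} [Ring H] [HopfAlgebra k H]
variable {P : Type} [Ring P] [Algebra k P]

lemma conv_id_antipode :
    conv k (LinearMap.id : H →ₗ[k] H) (HopfAlgebra.antipode (R := k)) = convUnit k := by
  have := HopfAlgebra.mul_antipode_lTensor_comul (R := k) (A := H)
  simpa [conv, convUnit, LinearMap.lTensor] using this

lemma conv_antipode_id :
    conv k (HopfAlgebra.antipode (R := k)) (LinearMap.id : H →ₗ[k] H) = convUnit k := by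
  have := HopfAlgebra.mul_antipode_rTensor_comul (R := k) (A := H)
  simpa [conv, convUnit, LinearMap.rTensor] using this

/-- `L p : H →ₗ P ⊗ H`, `h ↦ p h ⊗ 1`. -/
abbrev Lmap (p : H →ₗ[k] P) : H →ₗ[k] P ⊗[k] H :=
  (Algebra.TensorProduct.includeLeft (R := k) (S := k) (A := P) (B := H)).toLinearMap ∘ₗ p

/-- `R ψ : H →ₗ P ⊗ H`, `h ↦ 1 ⊗ ψ h`. -/
abbrev Rmap (ψ : H →ₗ[k] H) : H →ₗ[k] P ⊗[k] H :=
  (Algebra.TensorProduct.includeRight (R := k) (A := P) (B := H)).toLinearMap ∘ₗ ψ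

lemma conv_Rmap_Rmap (ψ ψ' : H →ₗ[k] H) :
    conv k (Rmap (P := P) ψ) (Rmap ψ') = Rmap (conv k ψ ψ') := by
  rw [Rmap, Rmap, ← algHom_comp_conv]

lemma Rmap_convUnit :
    Rmap (P := P) (convUnit k (C := H) (A := H)) = convUnit k := by
  rw [Rmap, ← algHom_comp_convUnit (Algebra.TensorProduct.includeRight (R := k) (A := P) (B := H))]

lemma conv_Lmap_Lmap (p p' : H →ₗ[k] P) :
    conv k (Lmap p) (Lmap p') = Lmap (conv k p p') := by
  rw [Lmap, Lmap, ← algHom_comp_conv]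

lemma Lmap_convUnit :
    Lmap (P := P) (convUnit k (C := H) (A := P)) = convUnit k := by
  rw [Lmap, ← algHom_comp_convUnit (Algebra.TensorProduct.includeLeft (R := k) (S := k)
    (A := P) (B := H))]

lemma conv_Lmap_Rmap (p : H →ₗ[k] P) :
    conv k (Lmap p) (Rmap LinearMap.id) =
      LinearMap.rTensor H p ∘ₗ Coalgebra.comul := by
  ext x
  rw [LinearMap.comp_apply, conv_apply_repr _ _ (ℛ k x), ← (ℛ k x).eq]
  simp [Algebra.TensorProduct.tmul_mul_tmul]

lemma AdMap_repr {h : H} (r : Coalgebra.Repr k h (H × H))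
    (rl : ∀ i, Coalgebra.Repr k (r.left i) (H × H)) :
    AdMap (k := k) h = ∑ i ∈ r.index, ∑ j ∈ (rl i).index,
      (rl i).right j ⊗ₜ[k] (HopfAlgebra.antipode (R := k) ((rl i).left j) * r.right i) := by
  rw [AdMap]
  simp only [LinearMap.comp_apply, ← r.eq, map_sum, LinearMap.rTensor_tmul]
  refine Finset.sum_congr rfl fun i _ => ?_
  rw [← (rl i).eq]
  simp [TensorProduct.sum_tmul, map_sum]

/-- `h ↦ p(h₂) ⊗ S(h₁) h₃` as a convolution product. -/
lemma rTensor_AdMap (p : H →ₗ[k] P) :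
    LinearMap.rTensor H p ∘ₗ AdMap (k := k) =
      conv k (Rmap (HopfAlgebra.antipode (R := k)))
        (conv k (Lmap p) (Rmap LinearMap.id)) := by
  ext h
  set r := ℛ k h with hr
  have key := Coalgebra.sum_tmul_tmul_eq (R := k) r
    (fun i => ℛ k (r.left i)) (fun i => ℛ k (r.right i))
  apply_fun (TensorProduct.map p (LinearMap.mul' k H ∘ₗ
      LinearMap.rTensor H (HopfAlgebra.antipode (R := k))) ∘ₗ
      (TensorProduct.leftComm k H H H).toLinearMap) at key
  simp only [map_sum, LinearMap.comp_apply, LinearEquiv.coe_coe, TensorProduct.leftComm_tmul,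
    TensorProduct.map_tmul, LinearMap.rTensor_tmul, LinearMap.mul'_apply] at key
  rw [LinearMap.comp_apply, AdMap_repr r (fun i => ℛ k (r.left i)), map_sum]
  simp only [map_sum, LinearMap.rTensor_tmul]
  rw [key]
  rw [conv_apply_repr _ _ r]
  refine Finset.sum_congr rfl fun i _ => ?_
  rw [conv_apply_repr _ _ (ℛ k (r.right i)), Finset.mul_sum]
  refine Finset.sum_congr rfl fun j _ => ?_
  simp [Algebra.TensorProduct.tmul_mul_tmul]

lemma core_conv :
    conv k (Rmap (P := H) LinearMap.id) (AdMap (k := k)) = Coalgebra.comul (R := k) (A := H) := by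
  have hAd : AdMap (k := k) (H := H) =
      conv k (Rmap (HopfAlgebra.antipode (R := k)))
        (conv k (Lmap LinearMap.id) (Rmap LinearMap.id)) := by
    have := rTensor_AdMap (P := H) (LinearMap.id : H →ₗ[k] H)
    rwa [LinearMap.rTensor_id, LinearMap.id_comp] at this
  rw [hAd, ← conv_assoc, conv_Rmap_Rmap, conv_id_antipode, Rmap_convUnit, conv_unit_left,
    conv_Lmap_Rmap, LinearMap.rTensor_id, LinearMap.id_comp]

end HopfTool

section ComodTool
variable {H A : Type} [Ring H] [HopfAlgebra k H] [Ring A] [Algebra k A]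
variable (c : ComodAlg k H A)

/-- `θ(f)(a) = a₀ f(a₁)`. -/
def theta (φ : H →ₗ[k] A) : A →ₗ[k] A :=
  LinearMap.mul' k A ∘ₗ LinearMap.lTensor A φ ∘ₗ c.ρ

lemma coassoc_elem (a : A) :
    LinearMap.rTensor H c.ρ (c.ρ a)
      = (TensorProduct.assoc k A H H).symm (LinearMap.lTensor A (Coalgebra.comul (R := k)) (c.ρ a)) := by
  rw [LinearEquiv.eq_symm_apply]
  exact c.coassoc_ρ a

/-- `x ⊗ z ↦ (1 ⊗ x) * z` on `H ⊗ (H ⊗ H)`. -/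
def coreMap : H ⊗[k] (H ⊗[k] H) →ₗ[k] H ⊗[k] H :=
  LinearMap.mul' k (H ⊗[k] H) ∘ₗ TensorProduct.map
    (Algebra.TensorProduct.includeRight (R := k) (A := H) (B := H)).toLinearMap LinearMap.id

lemma coreMap_tmul (x : H) (z : H ⊗[k] H) :
    coreMap (k := k) (x ⊗ₜ[k] z) = ((1 : H) ⊗ₜ[k] x) * z := by
  simp [coreMap]

lemma core_pt (h : H) :
    coreMap (k := k) (LinearMap.lTensor H (AdMap (k := k)) (Coalgebra.comul h))
      = Coalgebra.comul (R := k) h := by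
  have h1 := LinearMap.congr_fun (core_conv (k := k) (H := H)) h
  rw [conv, LinearMap.comp_apply, LinearMap.comp_apply] at h1
  have claim : ∀ z : H ⊗[k] H,
      coreMap (k := k) (LinearMap.lTensor H (AdMap (k := k)) z)
        = LinearMap.mul' k (H ⊗[k] H)
            (TensorProduct.map (Rmap LinearMap.id) (AdMap (k := k)) z) := by
    intro z
    induction z using TensorProduct.induction_on with
    | zero => simp
    | tmul x y =>
        simp only [LinearMap.lTensor_tmul, coreMap_tmul, TensorProduct.map_tmul,
          LinearMap.mul'_apply, Rmap, LinearMap.comp_apply, AlgHom.toLinearMap_apply,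
          Algebra.TensorProduct.includeRight_apply, LinearMap.id_apply]
    | add u v hu hv => simp only [map_add, hu, hv]
  rw [claim, h1]

section Theta
variable {c}

lemma theta_apply (φ : H →ₗ[k] A) (a : A) :
    theta c φ a = LinearMap.mul' k A (LinearMap.lTensor A φ (c.ρ a)) := rfl

lemma theta_Blin (φ : H →ₗ[k] A) {b : A} (hb : b ∈ c.coinv) (a : A) :
    theta c φ (b * a) = b * theta c φ a := by
  rw [theta_apply, theta_apply, c.ρ_mul, c.mem_coinv.mp hb]
  generalize (c.ρ a) = u
  induction u using TensorProduct.induction_on with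
  | zero => simp
  | tmul x h => simp [Algebra.TensorProduct.tmul_mul_tmul, mul_assoc]
  | add u v hu hv => simp only [mul_add, map_add, hu, hv]

lemma theta_one (φ : H →ₗ[k] A) : theta c φ 1 = φ 1 := by
  rw [theta_apply, c.ρ_one, Algebra.TensorProduct.one_def]
  simp

lemma theta_convUnit : theta c (convUnit k) = LinearMap.id := by
  ext a
  have h2 := c.counit_ρ a
  rw [theta_apply, LinearMap.id_apply]
  have claim : ∀ u : A ⊗[k] H,
      LinearMap.mul' k A (LinearMap.lTensor A (convUnit k) u)
        = TensorProduct.rid k A (LinearMap.lTensor A (Coalgebra.counit (R := k)) u) := by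
    intro u
    induction u using TensorProduct.induction_on with
    | zero => simp
    | tmul x h =>
        simp only [LinearMap.lTensor_tmul, LinearMap.mul'_apply, convUnit,
          LinearMap.comp_apply, Algebra.linearMap_apply, Algebra.algebraMap_eq_smul_one,
          mul_smul_comm, mul_one, TensorProduct.rid_tmul]
    | add u v hu hv => simp only [map_add, hu, hv]
  rw [claim, h2]

/-- Key expansion for `ρ (θ f a)` when `f` is `Ad`-colinear. -/
lemma rho_theta (f : H →ₗ[k] A)
    (hf : ∀ h, c.ρ (f h) = LinearMap.rTensor H f (AdMap (k := k) h)) (a : A) :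
    c.ρ (theta c f a) =
      LinearMap.mul' k (A ⊗[k] H)
        (LinearMap.lTensor (A ⊗[k] H) (LinearMap.rTensor H f ∘ₗ AdMap (k := k))
          ((TensorProduct.assoc k A H H).symm
            (LinearMap.lTensor A (Coalgebra.comul (R := k)) (c.ρ a)))) := by
  rw [← coassoc_elem, theta_apply]
  generalize (c.ρ a) = u
  induction u using TensorProduct.induction_on with
  | zero => simp
  | tmul x h =>
      simp only [LinearMap.lTensor_tmul, LinearMap.mul'_apply, LinearMap.rTensor_tmul,
        LinearMap.comp_apply]
      rw [c.ρ_mul, hf h]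
  | add u v hu hv => simp only [map_add, hu, hv, mul_add]

lemma theta_conv {f : H →ₗ[k] A}
    (hf : ∀ h, c.ρ (f h) = LinearMap.rTensor H f (AdMap (k := k) h)) (g : H →ₗ[k] A) :
    theta c (conv k f g) = theta c g ∘ₗ theta c f := by
  ext a
  rw [LinearMap.comp_apply, theta_apply g, rho_theta f hf a]
  have L5c : ∀ z : A ⊗[k] (H ⊗[k] H),
      LinearMap.mul' k A (LinearMap.lTensor A g
        (LinearMap.mul' k (A ⊗[k] H)
          (LinearMap.lTensor (A ⊗[k] H) (LinearMap.rTensor H f ∘ₗ AdMap (k := k))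
            ((TensorProduct.assoc k A H H).symm z))))
      = LinearMap.mul' k A (LinearMap.lTensor A
          (LinearMap.mul' k A ∘ₗ TensorProduct.map f g ∘ₗ coreMap (k := k)
            ∘ₗ LinearMap.lTensor H (AdMap (k := k))) z) := by
    intro z
    induction z using TensorProduct.induction_on with
    | zero => simp
    | tmul a' w =>
        induction w using TensorProduct.induction_on with
        | zero => simp
        | tmul x y =>
            simp only [TensorProduct.assoc_symm_tmul, LinearMap.lTensor_tmul,
              LinearMap.comp_apply]
            generalize (AdMap (k := k) y : H ⊗[k] H) = t
            induction t using TensorProduct.induction_on with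
            | zero => simp
            | tmul w v =>
                simp [coreMap_tmul, Algebra.TensorProduct.tmul_mul_tmul, mul_assoc]
            | add t1 t2 h1 h2 =>
                simp only [map_add, TensorProduct.tmul_add, mul_add, h1, h2]
        | add w1 w2 h1 h2 =>
            simp only [map_add, TensorProduct.tmul_add, h1, h2]
    | add z1 z2 h1 h2 => simp only [map_add, h1, h2]
  rw [L5c]
  have inner : ∀ u : A ⊗[k] H,
      LinearMap.lTensor A
          (LinearMap.mul' k A ∘ₗ TensorProduct.map f g ∘ₗ coreMap (k := k)
            ∘ₗ LinearMap.lTensor H (AdMap (k := k)))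
        (LinearMap.lTensor A (Coalgebra.comul (R := k)) u)
      = LinearMap.lTensor A (conv k f g) u := by
    intro u
    induction u using TensorProduct.induction_on with
    | zero => simp
    | tmul x h =>
        simp only [LinearMap.lTensor_tmul, LinearMap.comp_apply, core_pt h]
        rfl
    | add u v hu hv => simp only [map_add, hu, hv]
  rw [inner, theta_apply]

lemma theta_colin {f : H →ₗ[k] A}
    (hf : ∀ h, c.ρ (f h) = LinearMap.rTensor H f (AdMap (k := k) h)) (a : A) :
    c.ρ (theta c f a) = LinearMap.rTensor H (theta c f) (c.ρ a) := by
  rw [rho_theta f hf a]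
  have L4c : ∀ z : A ⊗[k] (H ⊗[k] H),
      LinearMap.mul' k (A ⊗[k] H)
        (LinearMap.lTensor (A ⊗[k] H) (LinearMap.rTensor H f ∘ₗ AdMap (k := k))
          ((TensorProduct.assoc k A H H).symm z))
      = TensorProduct.map (LinearMap.mul' k A ∘ₗ LinearMap.lTensor A f) LinearMap.id
          ((TensorProduct.assoc k A H H).symm
            (LinearMap.lTensor A (coreMap (k := k) ∘ₗ LinearMap.lTensor H (AdMap (k := k))) z)) := by
    intro z
    induction z using TensorProduct.induction_on with
    | zero => simp
    | tmul a' w =>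
        induction w using TensorProduct.induction_on with
        | zero => simp
        | tmul x y =>
            simp only [TensorProduct.assoc_symm_tmul, LinearMap.lTensor_tmul,
              LinearMap.comp_apply]
            generalize (AdMap (k := k) y : H ⊗[k] H) = t
            induction t using TensorProduct.induction_on with
            | zero => simp
            | tmul w v =>
                simp [coreMap_tmul, Algebra.TensorProduct.tmul_mul_tmul]
            | add t1 t2 h1 h2 =>
                simp only [map_add, TensorProduct.tmul_add, mul_add, h1, h2]
        | add w1 w2 h1 h2 => simp only [map_add, TensorProduct.tmul_add, h1, h2]
    | add z1 z2 h1 h2 => simp only [map_add, h1, h2]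
  rw [L4c]
  have inner : ∀ u : A ⊗[k] H,
      LinearMap.lTensor A (coreMap (k := k) ∘ₗ LinearMap.lTensor H (AdMap (k := k)))
          (LinearMap.lTensor A (Coalgebra.comul (R := k)) u)
        = LinearMap.lTensor A (Coalgebra.comul (R := k)) u := by
    intro u
    induction u using TensorProduct.induction_on with
    | zero => simp
    | tmul x h => simp only [LinearMap.lTensor_tmul, LinearMap.comp_apply, core_pt h]
    | add u v hu hv => simp only [map_add, hu, hv]
  rw [inner, ← coassoc_elem]
  generalize (c.ρ a) = u
  induction u using TensorProduct.induction_on with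
  | zero => simp
  | tmul x h => simp [theta_apply]
  | add u v hu hv => simp only [map_add, hu, hv]

end Theta
end ComodTool

section GaugeInv
variable {H A : Type} [Ring H] [HopfAlgebra k H] [Ring A] [Algebra k A]
variable (c : ComodAlg k H A)

/-- The coaction as an algebra morphism. -/
def rhoAlgHom : A →ₐ[k] A ⊗[k] H :=
  AlgHom.ofLinearMap c.ρ c.ρ_one c.ρ_mul

lemma rhoAlgHom_toLinearMap : (rhoAlgHom c).toLinearMap = c.ρ := rfl

variable {c}

lemma gauge_inv_colin {f f' : H →ₗ[k] A}
    (hf : ∀ h, c.ρ (f h) = LinearMap.rTensor H f (AdMap (k := k) h))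
    (hff' : conv k f f' = convUnit k) (hf'f : conv k f' f = convUnit k) (h : H) :
    c.ρ (f' h) = LinearMap.rTensor H f' (AdMap (k := k) h) := by
  set S : H →ₗ[k] H := HopfAlgebra.antipode (R := k)
  have hu : c.ρ ∘ₗ f = LinearMap.rTensor H f ∘ₗ AdMap (k := k) := LinearMap.ext hf
  have huu' : conv k (c.ρ ∘ₗ f) (c.ρ ∘ₗ f') = convUnit k := by
    rw [← rhoAlgHom_toLinearMap c, ← algHom_comp_conv, hff', algHom_comp_convUnit]
  have hu'u : conv k (c.ρ ∘ₗ f') (c.ρ ∘ₗ f) = convUnit k := by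
    rw [← rhoAlgHom_toLinearMap c, ← algHom_comp_conv, hf'f, algHom_comp_convUnit]
  have hvv' : conv k (LinearMap.rTensor H f ∘ₗ AdMap (k := k))
      (LinearMap.rTensor H f' ∘ₗ AdMap (k := k)) = convUnit k := by
    rw [rTensor_AdMap f, rTensor_AdMap f']
    rw [conv_assoc (Rmap S) (conv k (Lmap f) (Rmap LinearMap.id))]
    rw [conv_assoc (Lmap f) (Rmap LinearMap.id)]
    rw [← conv_assoc (Rmap LinearMap.id) (Rmap S), conv_Rmap_Rmap, conv_id_antipode,
      Rmap_convUnit, conv_unit_left, ← conv_assoc (Lmap f) (Lmap f'), conv_Lmap_Lmap,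
      hff', Lmap_convUnit, conv_unit_left, conv_Rmap_Rmap, conv_antipode_id, Rmap_convUnit]
  have : c.ρ ∘ₗ f' = LinearMap.rTensor H f' ∘ₗ AdMap (k := k) := by
    refine conv_inv_unique ?_ hu'u
    rw [hu] at huu' ⊢
    rw [← hvv']
  exact LinearMap.congr_fun this h

end GaugeInv


section GaloisTool
variable {H A : Type} [Ring H] [HopfAlgebra k H] [Ring A] [Algebra k A]
variable (P : QPB k H A)

/-- The Galois map as a linear equivalence. -/
def chiE : AtB k P.toComodAlg ≃ₗ[k] A ⊗[k] H :=
  LinearEquiv.ofBijective (chiQ k P.toComodAlg) P.galois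

lemma chiE_apply (x : AtB k P.toComodAlg) : chiE P x = chiQ k P.toComodAlg x := rfl

/-- The translation map `τ(h) = χ⁻¹(1 ⊗ h)`. -/
def tau : H →ₗ[k] AtB k P.toComodAlg :=
  (chiE P).symm.toLinearMap ∘ₗ TensorProduct.mk k A H 1

lemma tau_apply (h : H) : tau P h = (chiE P).symm ((1 : A) ⊗ₜ[k] h) := rfl

lemma chiQ_tau (h : H) : chiQ k P.toComodAlg (tau P h) = (1 : A) ⊗ₜ[k] h := by
  rw [tau_apply, ← chiE_apply]
  exact (chiE P).apply_symm_apply _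

variable {P}

lemma chiQ_mk (x : A ⊗[k] A) :
    chiQ k P.toComodAlg (mkAtB k P.toComodAlg x) = chi0 k P.toComodAlg x :=
  Submodule.liftQ_apply _ _ x

lemma chi_mk_one (a : A) :
    chiQ k P.toComodAlg (mkAtB k P.toComodAlg ((1 : A) ⊗ₜ[k] a)) = P.ρ a := by
  rw [chiQ_mk, chi0_tmul, ← Algebra.TensorProduct.one_def, one_mul]

lemma balancer_le_ker_mulF {F : A →ₗ[k] A}
    (hF : ∀ b ∈ P.toComodAlg.coinv, ∀ a, F (b * a) = b * F a) :
    balancer k P.toComodAlg ≤ LinearMap.ker (LinearMap.mul' k A ∘ₗ LinearMap.lTensor A F) := by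
  rw [balancer, balQ, Submodule.span_le]
  rintro x ⟨a, y, b, hb, rfl⟩
  rw [SetLike.mem_coe] at hb
  simp only [SetLike.mem_coe, LinearMap.mem_ker, map_sub, LinearMap.comp_apply,
    LinearMap.lTensor_tmul, LinearMap.mul'_apply]
  rw [hF b hb y, mul_assoc, sub_self]

/-- Lift of `a ⊗ a' ↦ a F(a')` to `A ⊗_B A`. -/
def tlift (F : A →ₗ[k] A)
    (hF : ∀ b ∈ P.toComodAlg.coinv, ∀ a, F (b * a) = b * F a) :
    AtB k P.toComodAlg →ₗ[k] A :=
  Submodule.liftQ _ (LinearMap.mul' k A ∘ₗ LinearMap.lTensor A F) (balancer_le_ker_mulF hF)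

lemma tlift_mk {F : A →ₗ[k] A} (hF : ∀ b ∈ P.toComodAlg.coinv, ∀ a, F (b * a) = b * F a)
    (x : A ⊗[k] A) :
    tlift F hF (mkAtB k P.toComodAlg x) = LinearMap.mul' k A (LinearMap.lTensor A F x) :=
  Submodule.liftQ_apply _ _ x

lemma chiQ_lBQ (a : A) (x : AtB k P.toComodAlg) :
    chiQ k P.toComodAlg (lBQ k (↑P.toComodAlg.coinv) a x)
      = (a ⊗ₜ[k] (1 : H)) * chiQ k P.toComodAlg x := by
  obtain ⟨y, rfl⟩ := Submodule.Quotient.mk_surjective _ x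
  erw [lBQ, Submodule.mapQ_apply]
  show chiQ k P.toComodAlg (mkAtB k P.toComodAlg _)
    = _ * chiQ k P.toComodAlg (mkAtB k P.toComodAlg y)
  rw [chiQ_mk, chiQ_mk]
  induction y using TensorProduct.induction_on with
  | zero => simp
  | tmul u v =>
      simp only [LinearMap.rTensor_tmul, LinearMap.mulLeft_apply, chi0_tmul]
      rw [← mul_assoc, Algebra.TensorProduct.tmul_mul_tmul, mul_one]
  | add u v hu hv => simp only [map_add, hu, hv, mul_add]

lemma tlift_lBQ {F : A →ₗ[k] A} (hF : ∀ b ∈ P.toComodAlg.coinv, ∀ a, F (b * a) = b * F a)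
    (a : A) (x : AtB k P.toComodAlg) :
    tlift F hF (lBQ k (↑P.toComodAlg.coinv) a x) = a * tlift F hF x := by
  obtain ⟨y, rfl⟩ := Submodule.Quotient.mk_surjective _ x
  erw [lBQ, Submodule.mapQ_apply]
  show tlift F hF (mkAtB k P.toComodAlg _) = a * tlift F hF (mkAtB k P.toComodAlg y)
  rw [tlift_mk, tlift_mk]
  induction y using TensorProduct.induction_on with
  | zero => simp
  | tmul u v =>
      simp only [LinearMap.rTensor_tmul, LinearMap.mulLeft_apply, LinearMap.lTensor_tmul,
        LinearMap.mul'_apply, mul_assoc]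
  | add u v hu hv => simp only [map_add, hu, hv, mul_add]

lemma chiE_symm_tmul (a : A) (h : H) :
    (chiE P).symm (a ⊗ₜ[k] h)
      = lBQ k (↑P.toComodAlg.coinv) a ((chiE P).symm ((1 : A) ⊗ₜ[k] h)) := by
  apply (chiE P).injective
  erw [(chiE P).apply_symm_apply, chiE_apply, chiQ_lBQ, ← chiE_apply,
    (chiE P).apply_symm_apply, Algebra.TensorProduct.tmul_mul_tmul, mul_one, one_mul]

/-- `θ⁻¹(F)(h) = h⟨1⟩ F(h⟨2⟩)`. -/
def thetaInv (F : A →ₗ[k] A)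
    (hF : ∀ b ∈ P.toComodAlg.coinv, ∀ a, F (b * a) = b * F a) : H →ₗ[k] A :=
  tlift F hF ∘ₗ (chiE P).symm.toLinearMap ∘ₗ TensorProduct.mk k A H 1

lemma thetaInv_apply {F : A →ₗ[k] A}
    (hF : ∀ b ∈ P.toComodAlg.coinv, ∀ a, F (b * a) = b * F a) (h : H) :
    thetaInv F hF h = tlift F hF (tau P h) := rfl

lemma mul_lTensor_thetaInv {F : A →ₗ[k] A}
    (hF : ∀ b ∈ P.toComodAlg.coinv, ∀ a, F (b * a) = b * F a) (u : A ⊗[k] H) :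
    LinearMap.mul' k A (LinearMap.lTensor A (thetaInv F hF) u)
      = tlift F hF ((chiE P).symm u) := by
  induction u using TensorProduct.induction_on with
  | zero => simp
  | tmul a h =>
      simp only [LinearMap.lTensor_tmul, LinearMap.mul'_apply]
      rw [chiE_symm_tmul, tlift_lBQ]
      rfl
  | add u v hu hv => simp only [map_add, hu, hv]

lemma theta_thetaInv {F : A →ₗ[k] A}
    (hF : ∀ b ∈ P.toComodAlg.coinv, ∀ a, F (b * a) = b * F a) :
    theta P.toComodAlg (thetaInv F hF) = F := by
  ext a
  rw [theta_apply, mul_lTensor_thetaInv hF, ← chi_mk_one a, ← chiE_apply,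
    (chiE P).symm_apply_apply, tlift_mk]
  simp

lemma tlift_theta (φ : H →ₗ[k] A) (x : AtB k P.toComodAlg) :
    tlift (theta P.toComodAlg φ) (fun b hb a => theta_Blin φ hb a) x
      = LinearMap.mul' k A (LinearMap.lTensor A φ (chiQ k P.toComodAlg x)) := by
  obtain ⟨y, rfl⟩ := Submodule.Quotient.mk_surjective _ x
  show tlift _ _ (mkAtB k P.toComodAlg y)
    = LinearMap.mul' k A (LinearMap.lTensor A φ (chiQ k P.toComodAlg (mkAtB k P.toComodAlg y)))
  rw [tlift_mk, chiQ_mk]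
  induction y using TensorProduct.induction_on with
  | zero => simp
  | tmul a a' =>
      simp only [LinearMap.lTensor_tmul, LinearMap.mul'_apply, chi0_tmul, theta_apply]
      generalize (P.ρ a' : A ⊗[k] H) = u
      induction u using TensorProduct.induction_on with
      | zero => simp
      | tmul x h =>
          simp only [Algebra.TensorProduct.tmul_mul_tmul, one_mul, LinearMap.lTensor_tmul,
            LinearMap.mul'_apply, mul_assoc]
      | add u v hu hv => simp only [map_add, hu, hv, mul_add, TensorProduct.tmul_add]
  | add u v hu hv => simp only [map_add, hu, hv]

lemma recover_theta (φ : H →ₗ[k] A) (h : H) (x : A ⊗[k] A)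
    (hx : chiQ k P.toComodAlg (mkAtB k P.toComodAlg x) = (1 : A) ⊗ₜ[k] h) :
    LinearMap.mul' k A (LinearMap.lTensor A (theta P.toComodAlg φ) x) = φ h := by
  have h1 := tlift_theta φ (mkAtB k P.toComodAlg x)
  rw [tlift_mk, hx] at h1
  simpa using h1

lemma thetaInv_theta (φ : H →ₗ[k] A) :
    thetaInv (P := P) (theta P.toComodAlg φ) (fun b hb a => theta_Blin φ hb a) = φ := by
  ext h
  rw [thetaInv_apply, tlift_theta, chiQ_tau]
  simp

lemma theta_injective {φ₁ φ₂ : H →ₗ[k] A}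
    (hθ : theta P.toComodAlg φ₁ = theta P.toComodAlg φ₂) : φ₁ = φ₂ := by
  ext h
  obtain ⟨w, hw⟩ := Submodule.Quotient.mk_surjective _ (tau P h)
  have hx : chiQ k P.toComodAlg (mkAtB k P.toComodAlg w) = (1 : A) ⊗ₜ[k] h := by
    show chiQ k P.toComodAlg (Submodule.Quotient.mk w) = _
    rw [hw, chiQ_tau]
  rw [← recover_theta φ₁ h w hx, ← recover_theta φ₂ h w hx, hθ]

lemma thetaInv_one {F : A →ₗ[k] A}
    (hF : ∀ b ∈ P.toComodAlg.coinv, ∀ a, F (b * a) = b * F a) (hF1 : F 1 = 1) :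
    thetaInv F hF 1 = 1 := by
  have h1 : tau P 1 = mkAtB k P.toComodAlg ((1 : A) ⊗ₜ[k] (1 : A)) := by
    rw [tau_apply, LinearEquiv.symm_apply_eq, chiE_apply, chi_mk_one, P.ρ_one,
      Algebra.TensorProduct.one_def]
  rw [thetaInv_apply, h1, tlift_mk]
  simp [hF1]

end GaloisTool

section RhoHat
variable {H A : Type} [Ring H] [HopfAlgebra k H] [Ring A] [Algebra k A]
variable (P : QPB k H A)

/-- `a ⊗ a' ↦ (a₀ ⊗_B a'₀) ⊗ a₁ a'₁`. -/
def rhoHat0 : A ⊗[k] A →ₗ[k] AtB k P.toComodAlg ⊗[k] H :=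
  TensorProduct.map (mkAtB k P.toComodAlg) (LinearMap.mul' k H) ∘ₗ
    (TensorProduct.tensorTensorTensorComm k A H A H).toLinearMap ∘ₗ
    TensorProduct.map P.ρ P.ρ

lemma rhoHat0_tmul (a a' : A) :
    rhoHat0 P (a ⊗ₜ[k] a') = TensorProduct.map (mkAtB k P.toComodAlg) (LinearMap.mul' k H)
      ((TensorProduct.tensorTensorTensorComm k A H A H) (P.ρ a ⊗ₜ[k] P.ρ a')) := rfl

lemma balancer_le_ker_rhoHat0 :
    balancer k P.toComodAlg ≤ LinearMap.ker (rhoHat0 P) := by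
  refine Submodule.span_le.mpr ?_
  rintro x ⟨a, y, b, hb, rfl⟩
  rw [SetLike.mem_coe] at hb
  rw [SetLike.mem_coe, LinearMap.mem_ker, map_sub, sub_eq_zero, rhoHat0_tmul, rhoHat0_tmul,
    P.ρ_mul, P.ρ_mul, P.toComodAlg.mem_coinv.mp hb]
  generalize (P.ρ a : A ⊗[k] H) = x
  generalize (P.ρ y : A ⊗[k] H) = z
  induction x using TensorProduct.induction_on with
  | zero => simp
  | tmul u s =>
      induction z using TensorProduct.induction_on with
      | zero => simp
      | tmul v t =>
          simp only [Algebra.TensorProduct.tmul_mul_tmul, mul_one, one_mul,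
            TensorProduct.tensorTensorTensorComm_tmul, TensorProduct.map_tmul]
          congr 1
          rw [mkAtB, Submodule.mkQ_apply, Submodule.mkQ_apply, Submodule.Quotient.eq]
          exact Submodule.subset_span ⟨u, v, b, hb, rfl⟩
      | add z1 z2 h1 h2 =>
          simp only [mul_add, map_add, TensorProduct.tmul_add, TensorProduct.add_tmul,
            h1, h2]
  | add x1 x2 h1 h2 =>
      simp only [add_mul, map_add, TensorProduct.tmul_add, TensorProduct.add_tmul,
        h1, h2]

/-- The codiagonal coaction on `A ⊗_B A`. -/
def rhoHat : AtB k P.toComodAlg →ₗ[k] AtB k P.toComodAlg ⊗[k] H :=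
  Submodule.liftQ _ (rhoHat0 P) (balancer_le_ker_rhoHat0 P)

lemma rhoHat_mk (x : A ⊗[k] A) :
    rhoHat P (mkAtB k P.toComodAlg x) = rhoHat0 P x :=
  Submodule.liftQ_apply _ _ x

/-- `(a ⊗ x) ⊗ (w ⊗ v) ↦ (a ⊗ w) ⊗ x v`. -/
def XiMap : (A ⊗[k] H) ⊗[k] (H ⊗[k] H) →ₗ[k] (A ⊗[k] H) ⊗[k] H :=
  LinearMap.lTensor (A ⊗[k] H) (LinearMap.mul' k H) ∘ₗ
    (TensorProduct.tensorTensorTensorComm k A H H H).toLinearMap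

lemma XiMap_tmul (a : A) (x w v : H) :
    XiMap (k := k) ((a ⊗ₜ[k] x) ⊗ₜ[k] (w ⊗ₜ[k] v)) = (a ⊗ₜ[k] w) ⊗ₜ[k] (x * v) := by
  simp [XiMap]

lemma star_identity :
    LinearMap.rTensor H (chiQ k P.toComodAlg) ∘ₗ rhoHat P
      = XiMap ∘ₗ TensorProduct.map P.ρ (AdMap (k := k)) ∘ₗ chiQ k P.toComodAlg := by
  apply Submodule.linearMap_qext
  apply TensorProduct.ext'
  intro a a'
  have e1 := coassoc_elem P.toComodAlg a'
  simp only [LinearMap.comp_apply, Submodule.mkQ_apply]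
  show LinearMap.rTensor H (chiQ k P.toComodAlg) (rhoHat P (mkAtB k P.toComodAlg (a ⊗ₜ[k] a')))
    = XiMap (TensorProduct.map P.ρ (AdMap (k := k))
        (chiQ k P.toComodAlg (mkAtB k P.toComodAlg (a ⊗ₜ[k] a'))))
  rw [rhoHat_mk, rhoHat0_tmul, chiQ_mk, chi0_tmul]
  -- rewrite the right hand side
  have R2 : ∀ y : A ⊗[k] H,
      TensorProduct.map P.ρ (AdMap (k := k)) ((a ⊗ₜ[k] (1 : H)) * y)
        = TensorProduct.map (LinearMap.mulLeft k (P.ρ a)) LinearMap.id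
            (TensorProduct.map P.ρ (AdMap (k := k)) y) := by
    intro y
    induction y using TensorProduct.induction_on with
    | zero => simp
    | tmul v t =>
        simp only [Algebra.TensorProduct.tmul_mul_tmul, one_mul, TensorProduct.map_tmul,
          LinearMap.mulLeft_apply, LinearMap.id_apply, P.ρ_mul]
    | add y1 y2 h1 h2 => simp only [mul_add, map_add, h1, h2]
  have R3 : ∀ y : A ⊗[k] H,
      TensorProduct.map P.ρ (AdMap (k := k)) y
        = TensorProduct.map LinearMap.id (AdMap (k := k)) (LinearMap.rTensor H P.ρ y) := by
    intro y
    induction y using TensorProduct.induction_on with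
    | zero => simp
    | tmul v t => simp
    | add y1 y2 h1 h2 => simp only [map_add, h1, h2]
  rw [R2, R3 (P.ρ a'), e1]
  have addL : ∀ (x1 x2 : A ⊗[k] H) (Z : (A ⊗[k] H) ⊗[k] (H ⊗[k] H)),
      TensorProduct.map (LinearMap.mulLeft k (x1 + x2)) LinearMap.id Z
        = TensorProduct.map (LinearMap.mulLeft k x1) LinearMap.id Z
          + TensorProduct.map (LinearMap.mulLeft k x2) LinearMap.id Z := by
    intro x1 x2 Z
    induction Z using TensorProduct.induction_on with
    | zero => simp
    | tmul p q =>
        simp only [TensorProduct.map_tmul, LinearMap.mulLeft_apply, LinearMap.id_apply,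
          add_mul, TensorProduct.add_tmul]
    | add Z1 Z2 g1 g2 => simp only [map_add, g1, g2]; abel
  -- now both sides depend on `ρ a` and `lTensor Δ (ρ a')`
  generalize (P.ρ a : A ⊗[k] H) = x
  induction x using TensorProduct.induction_on with
  | zero => simp
  | tmul u s =>
      -- left hand side in terms of `rTensor ρ (ρ a')`
      have C' : ∀ y : A ⊗[k] H,
          LinearMap.rTensor H (chiQ k P.toComodAlg)
            (TensorProduct.map (mkAtB k P.toComodAlg) (LinearMap.mul' k H)
              ((TensorProduct.tensorTensorTensorComm k A H A H) ((u ⊗ₜ[k] s) ⊗ₜ[k] y)))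
          = TensorProduct.map (LinearMap.mulLeft k (u ⊗ₜ[k] (1 : H))) (LinearMap.mulLeft k s)
              (LinearMap.rTensor H P.ρ y) := by
        intro y
        induction y using TensorProduct.induction_on with
        | zero => simp
        | tmul v t =>
            simp only [TensorProduct.tensorTensorTensorComm_tmul, TensorProduct.map_tmul,
              LinearMap.rTensor_tmul, LinearMap.mul'_apply, LinearMap.mulLeft_apply, chiQ_mk,
              chi0_tmul]
        | add y1 y2 h1 h2 => simp only [map_add, TensorProduct.tmul_add, h1, h2]
      rw [C' (P.ρ a'), e1]
      -- final core step
      have G' : ∀ (v : A) (w : H ⊗[k] H),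
          XiMap (TensorProduct.map (LinearMap.mulLeft k (u ⊗ₜ[k] s)) LinearMap.id
            (TensorProduct.map LinearMap.id (AdMap (k := k))
              ((TensorProduct.assoc k A H H).symm (v ⊗ₜ[k] w))))
          = TensorProduct.map (LinearMap.mulLeft k (u ⊗ₜ[k] (1 : H))) (LinearMap.mulLeft k s)
              ((TensorProduct.assoc k A H H).symm
                (v ⊗ₜ[k] coreMap (k := k) (LinearMap.lTensor H (AdMap (k := k)) w))) := by
        intro v w
        induction w using TensorProduct.induction_on with
        | zero => simp
        | tmul x y =>
            simp only [TensorProduct.assoc_symm_tmul, TensorProduct.map_tmul,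
              LinearMap.mulLeft_apply, LinearMap.id_apply, LinearMap.lTensor_tmul, coreMap_tmul]
            generalize (AdMap (k := k) y : H ⊗[k] H) = t
            induction t using TensorProduct.induction_on with
            | zero => simp
            | tmul w' v' =>
                simp only [Algebra.TensorProduct.tmul_mul_tmul, one_mul, XiMap_tmul,
                  TensorProduct.assoc_symm_tmul, TensorProduct.map_tmul,
                  LinearMap.mulLeft_apply, mul_assoc]
            | add t1 t2 h1 h2 =>
                simp only [mul_add, map_add, TensorProduct.tmul_add, h1, h2]
        | add w1 w2 h1 h2 =>
            simp only [map_add, TensorProduct.tmul_add, h1, h2]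
      generalize (P.ρ a' : A ⊗[k] H) = z
      induction z using TensorProduct.induction_on with
      | zero => simp
      | tmul v t =>
          simp only [LinearMap.lTensor_tmul]
          rw [G' v (Coalgebra.comul (R := k) t), core_pt]
      | add z1 z2 h1 h2 => simp only [map_add, h1, h2]
  | add x1 x2 h1 h2 =>
      rw [addL, map_add, ← h1, ← h2, TensorProduct.add_tmul, map_add, map_add, map_add]

end RhoHat
section TauAd
variable {H A : Type} [Ring H] [HopfAlgebra k H] [Ring A] [Algebra k A]
variable (P : QPB k H A)

lemma rhoHat_tau (h : H) :
    rhoHat P (tau P h) = LinearMap.rTensor H (tau P) (AdMap (k := k) h) := by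
  have inj : Function.Injective
      (TensorProduct.congr (chiE P) (LinearEquiv.refl k H)) := LinearEquiv.injective _
  have cast : ∀ z : AtB k P.toComodAlg ⊗[k] H,
      TensorProduct.congr (chiE P) (LinearEquiv.refl k H) z
        = LinearMap.rTensor H (chiQ k P.toComodAlg) z := by
    intro z
    induction z using TensorProduct.induction_on with
    | zero => simp
    | tmul x y => simp [TensorProduct.congr_tmul, chiE_apply]
    | add u v hu hv => simp only [map_add, hu, hv]
  apply inj
  rw [cast, cast]
  have l1 := LinearMap.congr_fun (star_identity P) (tau P h)
  simp only [LinearMap.comp_apply] at l1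
  rw [l1, chiQ_tau, TensorProduct.map_tmul, P.ρ_one, Algebra.TensorProduct.one_def]
  have l2 : ∀ t : H ⊗[k] H,
      XiMap (((1 : A) ⊗ₜ[k] (1 : H)) ⊗ₜ[k] t)
        = LinearMap.rTensor H (TensorProduct.mk k A H 1) t := by
    intro t
    induction t using TensorProduct.induction_on with
    | zero => simp
    | tmul w v => simp [XiMap_tmul]
    | add u v hu hv => simp only [map_add, TensorProduct.tmul_add, hu, hv]
  have l3 : ∀ t : H ⊗[k] H,
      LinearMap.rTensor H (chiQ k P.toComodAlg) (LinearMap.rTensor H (tau P) t)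
        = LinearMap.rTensor H (TensorProduct.mk k A H 1) t := by
    intro t
    induction t using TensorProduct.induction_on with
    | zero => simp
    | tmul w v => simp [chiQ_tau]
    | add u v hu hv => simp only [map_add, hu, hv]
  rw [l2, l3]

variable {P}

lemma rho_tlift {F : A →ₗ[k] A}
    (hF : ∀ b ∈ P.toComodAlg.coinv, ∀ a, F (b * a) = b * F a)
    (hcolF : ∀ a, P.ρ (F a) = LinearMap.rTensor H F (P.ρ a)) (x : AtB k P.toComodAlg) :
    P.ρ (tlift F hF x) = LinearMap.rTensor H (tlift F hF) (rhoHat P x) := by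
  obtain ⟨y, rfl⟩ := Submodule.Quotient.mk_surjective _ x
  show P.ρ (tlift F hF (mkAtB k P.toComodAlg y))
    = LinearMap.rTensor H (tlift F hF) (rhoHat P (mkAtB k P.toComodAlg y))
  rw [tlift_mk, rhoHat_mk]
  have sub : ∀ x y : A ⊗[k] H,
      LinearMap.rTensor H (tlift F hF)
        (TensorProduct.map (mkAtB k P.toComodAlg) (LinearMap.mul' k H)
          ((TensorProduct.tensorTensorTensorComm k A H A H) (x ⊗ₜ[k] y)))
        = x * LinearMap.rTensor H F y := by
    intro x y
    induction x using TensorProduct.induction_on with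
    | zero => simp
    | tmul u s =>
        induction y using TensorProduct.induction_on with
        | zero => simp
        | tmul v t =>
            simp only [TensorProduct.tensorTensorTensorComm_tmul, TensorProduct.map_tmul,
              LinearMap.rTensor_tmul, tlift_mk, LinearMap.lTensor_tmul, LinearMap.mul'_apply,
              Algebra.TensorProduct.tmul_mul_tmul]
        | add y1 y2 h1 h2 =>
            simp only [map_add, TensorProduct.tmul_add, mul_add, h1, h2]
    | add x1 x2 h1 h2 =>
        simp only [map_add, TensorProduct.add_tmul, add_mul, h1, h2]
  induction y using TensorProduct.induction_on with
  | zero => simp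
  | tmul a a' =>
      rw [rhoHat0_tmul, sub (P.ρ a) (P.ρ a'), LinearMap.lTensor_tmul, LinearMap.mul'_apply,
        P.ρ_mul, hcolF a']
  | add y1 y2 h1 h2 => simp only [map_add, h1, h2]

lemma thetaInv_colin {F : A →ₗ[k] A}
    (hF : ∀ b ∈ P.toComodAlg.coinv, ∀ a, F (b * a) = b * F a)
    (hcolF : ∀ a, P.ρ (F a) = LinearMap.rTensor H F (P.ρ a)) (h : H) :
    P.ρ (thetaInv F hF h) = LinearMap.rTensor H (thetaInv F hF) (AdMap (k := k) h) := by
  rw [thetaInv_apply, rho_tlift hF hcolF, rhoHat_tau]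
  generalize (AdMap (k := k) h : H ⊗[k] H) = t
  induction t using TensorProduct.induction_on with
  | zero => simp
  | tmul w v => simp [thetaInv_apply hF]
  | add u v hu hv => simp only [map_add, hu, hv]

end TauAd
section Assembly
variable {H A : Type} [Ring H] [HopfAlgebra k H] [Ring A] [Algebra k A]
variable (P : QPB k H A)

lemma isVertAut_theta {f : H →ₗ[k] A} (hf : IsGauge P.toComodAlg f) :
    IsVertAut P.toComodAlg (theta P.toComodAlg f) := by
  obtain ⟨⟨f', hff', hf'f⟩, hf1, hcol⟩ := hf
  have hcol' : ∀ h, P.ρ (f' h) = LinearMap.rTensor H f' (AdMap (k := k) h) :=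
    gauge_inv_colin hcol hff' hf'f
  have comp1 : theta P.toComodAlg f' ∘ₗ theta P.toComodAlg f = LinearMap.id := by
    rw [← theta_conv hcol f', hff', theta_convUnit]
  have comp2 : theta P.toComodAlg f ∘ₗ theta P.toComodAlg f' = LinearMap.id := by
    rw [← theta_conv hcol' f, hf'f, theta_convUnit]
  refine ⟨?_, fun b hb a => theta_Blin f hb a, by rw [theta_one, hf1], fun a => theta_colin hcol a⟩
  exact Function.bijective_iff_has_inverse.mpr
    ⟨theta P.toComodAlg f', fun a => LinearMap.congr_fun comp1 a,
      fun a => LinearMap.congr_fun comp2 a⟩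

lemma isGauge_thetaInv {F : A →ₗ[k] A} (hF : IsVertAut P.toComodAlg F) :
    IsGauge P.toComodAlg (thetaInv (P := P) F hF.2.1) := by
  obtain ⟨hbij, hB, hF1, hFcol⟩ := hF
  set Fe : A ≃ₗ[k] A := LinearEquiv.ofBijective F hbij with hFe
  have hFeF : ∀ a, Fe a = F a := fun a => rfl
  have FinvB : ∀ b ∈ P.toComodAlg.coinv, ∀ a,
      Fe.symm.toLinearMap (b * a) = b * Fe.symm.toLinearMap a := by
    intro b hb a
    apply Fe.injective
    rw [LinearEquiv.coe_toLinearMap, Fe.apply_symm_apply, hFeF, hB b hb, ← hFeF,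
      Fe.apply_symm_apply]
  have Finv1 : Fe.symm.toLinearMap 1 = 1 := by
    rw [LinearEquiv.coe_toLinearMap, LinearEquiv.symm_apply_eq, hFeF, hF1]
  have cancel1 : ∀ u : A ⊗[k] H,
      LinearMap.rTensor H Fe.symm.toLinearMap (LinearMap.rTensor H F u) = u := by
    intro u
    induction u using TensorProduct.induction_on with
    | zero => simp
    | tmul x h =>
        simp only [LinearMap.rTensor_tmul, LinearEquiv.coe_toLinearMap]
        rw [show F x = Fe x from rfl, Fe.symm_apply_apply]
    | add u v hu hv => simp only [map_add, hu, hv]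
  have Finvcol : ∀ a, P.ρ (Fe.symm.toLinearMap a)
      = LinearMap.rTensor H Fe.symm.toLinearMap (P.ρ a) := by
    intro a
    have h1 := hFcol (Fe.symm a)
    rw [show F (Fe.symm a) = a from Fe.apply_symm_apply a] at h1
    rw [h1, cancel1]
    rfl
  set g := thetaInv (P := P) F hB with hg
  set g' := thetaInv (P := P) Fe.symm.toLinearMap FinvB with hg'
  have thg : theta P.toComodAlg g = F := theta_thetaInv hB
  have thg' : theta P.toComodAlg g' = Fe.symm.toLinearMap := theta_thetaInv FinvB
  have gcol : ∀ h, P.ρ (g h) = LinearMap.rTensor H g (AdMap (k := k) h) :=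
    thetaInv_colin hB hFcol
  have g'col : ∀ h, P.ρ (g' h) = LinearMap.rTensor H g' (AdMap (k := k) h) :=
    thetaInv_colin FinvB Finvcol
  have FinvF : Fe.symm.toLinearMap ∘ₗ F = LinearMap.id := by
    ext a
    simp only [LinearMap.comp_apply, LinearEquiv.coe_toLinearMap, LinearMap.id_apply]
    rw [show F a = Fe a from rfl, Fe.symm_apply_apply]
  have FFinv : F ∘ₗ Fe.symm.toLinearMap = LinearMap.id := by
    ext a
    simp only [LinearMap.comp_apply, LinearEquiv.coe_toLinearMap, LinearMap.id_apply]
    rw [show F (Fe.symm a) = Fe (Fe.symm a) from rfl, Fe.apply_symm_apply]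
  have hgg' : conv k g g' = convUnit k := by
    apply theta_injective (P := P)
    rw [theta_conv gcol g', thg, thg', theta_convUnit, FinvF]
  have hg'g : conv k g' g = convUnit k := by
    apply theta_injective (P := P)
    rw [theta_conv g'col g, thg, thg', theta_convUnit, FFinv]
  exact ⟨⟨g', hgg', hg'g⟩, thetaInv_one hB hF1, gcol⟩

end Assembly

end Aux13

/-! ## Statement 13: gauge transformations vs. vertical automorphisms -/

/-- On a quantum principal bundle there is a group isomorphism
`θ : Gau(B,A) → aut_v(B,A)`, `θ(f)(a) = a₀ f(a₁)`, from gauge transformations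
(with convolution) to vertical automorphisms (with opposite composition); its
inverse is `θ⁻¹(F)(h) = h⟨1⟩ F(h⟨2⟩)` where `τ(h) = h⟨1⟩ ⊗_B h⟨2⟩` is the
translation map. -/
theorem gauge_iso_vertical_automorphisms
    {H A : Type} [Ring H] [HopfAlgebra k H] [Ring A] [Algebra k A]
    (P : QPB k H A) :
    ∃ Θ : {f : H →ₗ[k] A // IsGauge P.toComodAlg f} ≃
          {F : A →ₗ[k] A // IsVertAut P.toComodAlg F},
      -- `θ(f)(a) = a₀ f(a₁)`
      (∀ f : {f : H →ₗ[k] A // IsGauge P.toComodAlg f},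
        (Θ f).1 = LinearMap.mul' k A ∘ₗ LinearMap.lTensor A f.1 ∘ₗ P.ρ) ∧
      -- `θ` is a group morphism onto vertical automorphisms with the
      -- opposite composition
      (∀ (f g : {f : H →ₗ[k] A // IsGauge P.toComodAlg f})
        (hfg : IsGauge P.toComodAlg (conv k f.1 g.1)),
        (Θ ⟨conv k f.1 g.1, hfg⟩).1 = (Θ g).1 ∘ₗ (Θ f).1) ∧
      -- the inverse is `θ⁻¹(F)(h) = h⟨1⟩ F(h⟨2⟩)`: for any representative
      -- `x ∈ A ⊗ A` of the translation map `τ(h) = χ⁻¹(1 ⊗ h)` one has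
      -- `θ⁻¹(F)(h) = (m ∘ (id ⊗ F))(x)`
      (∀ (F : {F : A →ₗ[k] A // IsVertAut P.toComodAlg F}) (h : H) (x : A ⊗[k] A),
        chiQ k P.toComodAlg (mkAtB k P.toComodAlg x) = 1 ⊗ₜ[k] h →
        (Θ.symm F).1 h = LinearMap.mul' k A (LinearMap.lTensor A F.1 x)) := by
  refine ⟨⟨fun f => ⟨theta P.toComodAlg f.1, isVertAut_theta P f.2⟩,
      fun F => ⟨thetaInv (P := P) F.1 F.2.2.1, isGauge_thetaInv P F.2⟩, ?_, ?_⟩, ?_, ?_, ?_⟩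
  · intro f
    exact Subtype.ext (thetaInv_theta f.1)
  · intro F
    exact Subtype.ext (theta_thetaInv F.2.2.1)
  · intro f
    rfl
  · intro f g hfg
    exact theta_conv f.2.2.2 g.1
  · intro F h x hx
    show thetaInv (P := P) F.1 F.2.2.1 h = _
    have hmk : mkAtB k P.toComodAlg x = tau P h := by
      apply (chiE P).injective
      rw [chiE_apply, chiE_apply, hx, chiQ_tau]
    rw [thetaInv_apply, ← hmk, tlift_mk]

end QPBPaper
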